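/- arXiv:1410.2284 — 11 statements merged into one kernel-verified Lean document; each statement's English description precedes it below -/
import Mathlib

section
/- Let G be a finite group, g₀ ∈ G, and α an automorphism of G of order n. Let f = g₀·α(g₀)·α²(g₀)···α^(n-1)(g₀). Then the order of the permutation A of G defined by A(g) = g₀·α(g) equals ord(f)·ord(α). -/
/-- The order of the affine permutation `g ↦ g₀ · α(g)` of a finite group `G`
equals `ord(f) · ord(α)`, where `f = g₀·α(g₀)·α²(g₀)⋯α^(n-1)(g₀)` and
`n = ord(α)`. -/
theorem stmt2 {G : Type*} [Group G] [Finite G] (g₀ : G) (α : MulAut G) :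
    orderOf (α.toEquiv.trans (Equiv.mulLeft g₀)) =
      orderOf (((List.range (orderOf α)).map fun i => (α ^ i) g₀).prod) * orderOf α := by
  set A : Equiv.Perm G := α.toEquiv.trans (Equiv.mulLeft g₀) with hA
  set p : ℕ → G := fun k => ((List.range k).map fun i => (α ^ i) g₀).prod with hp
  have key : ∀ k g, (A ^ k) g = p k * (α ^ k) g := by
    intro k
    induction k with
    | zero => intro g; simp [hp]
    | succ k ih =>
      intro g
      have h1 : (A ^ (k + 1)) g = (A ^ k) (A g) := by rw [pow_succ]; rfl
      have h2 : A g = g₀ * α g := rfl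
      have h3 : ((α : MulAut G) ^ (k + 1)) g = (α ^ k) (α g) := by
        rw [pow_succ]; rfl
      rw [h1, h2, ih, h3]
      simp [hp, List.range_succ, map_mul, mul_assoc]
  set n := orderOf α with hn
  set f := p n with hf
  have hαn : α ^ n = 1 := pow_orderOf_eq_one α
  have padd : ∀ a b, p (a + b) = p a * (α ^ a) (p b) := by
    intro a b
    have h1 := key (a + b) 1
    have h2 : (A ^ (a + b)) 1 = (A ^ a) ((A ^ b) 1) := by
      rw [pow_add]; rfl
    rw [key b, key a] at h2
    simp only [map_one, mul_one] at h1 h2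
    rw [← h1, h2]
  have pmul : ∀ k, p (k * n) = f ^ k := by
    intro k
    induction k with
    | zero => simp [hp]
    | succ k ih =>
      have : (k + 1) * n = k * n + n := by ring
      rw [this, padd, ih]
      have : (α : MulAut G) ^ (k * n) = 1 := by
        rw [mul_comm, pow_mul, hαn, one_pow]
      rw [this, pow_succ]
      rfl
  have hAN : A ^ (orderOf f * n) = 1 := by
    ext g
    rw [key]
    have h1 : p (orderOf f * n) = 1 := by rw [pmul, pow_orderOf_eq_one]
    have h2 : (α : MulAut G) ^ (orderOf f * n) = 1 := by
      rw [mul_comm, pow_mul, hαn, one_pow]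
    rw [h1, h2]
    simp
  refine Nat.dvd_antisymm (orderOf_dvd_of_pow_eq_one hAN) ?_
  set m := orderOf A with hm
  have hAm : A ^ m = 1 := pow_orderOf_eq_one A
  have hpm : p m = 1 := by
    have := key m 1
    rw [hAm] at this
    simpa using this.symm
  have hαm : α ^ m = 1 := by
    ext g
    have := key m g
    rw [hAm, hpm] at this
    simpa using this.symm
  have hn_dvd : n ∣ m := orderOf_dvd_of_pow_eq_one hαm
  obtain ⟨k, hk⟩ := hn_dvd
  have : f ^ k = 1 := by
    rw [← pmul, mul_comm, ← hk, hpm]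
  have hfk : orderOf f ∣ k := orderOf_dvd_of_pow_eq_one this
  rw [hk, mul_comm n k]
  exact mul_dvd_mul hfk dvd_rfl
end

section
/- Let G be a finite abelian group, g₀ ∈ G, and α an automorphism of G. Let f = g₀·α(g₀)···α^(ord(α)-1)(g₀). Then f is a fixed point of α, and consequently the order of the affine map g ↦ g₀·α(g) is at most meo(fix(α))·ord(α), where meo denotes maximum element order and fix(α) is the subgroup of fixed points of α. -/
/-- For a finite abelian group `G`, the element
`f = g₀·α(g₀)⋯α^(ord α - 1)(g₀)` is a fixed point of `α`, and the order of the
affine map `g ↦ g₀·α(g)` is at most `meo(fix α) · ord(α)`, where `meo` is the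
maximum element order and `fix α` the set of fixed points of `α`. -/
theorem stmt3 {G : Type*} [CommGroup G] [Finite G] (g₀ : G) (α : MulAut G) :
    α (((List.range (orderOf α)).map fun i => (α ^ i) g₀).prod) =
      ((List.range (orderOf α)).map fun i => (α ^ i) g₀).prod ∧
    orderOf (α.toEquiv.trans (Equiv.mulLeft g₀)) ≤
      sSup {n : ℕ | ∃ g : G, α g = g ∧ n = orderOf g} * orderOf α := by
  set n := orderOf α with hn
  -- rewrite list prod as Finset prod
  have hlist : ∀ m : ℕ, (((List.range m).map fun i => (α ^ i) g₀).prod)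
      = ∏ i ∈ Finset.range m, (α ^ i) g₀ := fun m => rfl
  have hαn : (α ^ n) g₀ = g₀ := by rw [pow_orderOf_eq_one]; rfl
  -- key shift identity
  have hshift : ∀ m : ℕ, α (∏ i ∈ Finset.range m, (α ^ i) g₀)
      = ∏ i ∈ Finset.range m, (α ^ (i + 1)) g₀ := fun m => by
    rw [map_prod]
    refine Finset.prod_congr rfl fun i _ => ?_
    rw [pow_succ']
    rfl
  have hfix : α (∏ i ∈ Finset.range n, (α ^ i) g₀) = ∏ i ∈ Finset.range n, (α ^ i) g₀ := by
    rw [hshift]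
    have h1 := Finset.prod_range_succ' (fun i => (α ^ i) g₀) n
    have h2 := Finset.prod_range_succ (fun i => (α ^ i) g₀) n
    have : (∏ i ∈ Finset.range n, (α ^ (i + 1)) g₀) * (α ^ 0) g₀
        = (∏ i ∈ Finset.range n, (α ^ i) g₀) * (α ^ n) g₀ := by
      rw [← h1, ← h2]
    simpa [hαn] using this
  refine ⟨by rw [hlist]; exact hfix, ?_⟩
  set f := ∏ i ∈ Finset.range n, (α ^ i) g₀ with hf
  set T := α.toEquiv.trans (Equiv.mulLeft g₀) with hT
  have hTapp : ∀ g : G, T g = g₀ * α g := fun g => rfl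
  -- T^k g = (∏ i < k, α^i g₀) * α^k g
  have hTk : ∀ (k : ℕ) (g : G), (T ^ k) g = (∏ i ∈ Finset.range k, (α ^ i) g₀) * (α ^ k) g := by
    intro k
    induction k with
    | zero => intro g; simp
    | succ k ih =>
        intro g
        rw [pow_succ', Equiv.Perm.mul_apply, hTapp, ih, map_mul, hshift,
          Finset.prod_range_succ' (fun i => (α ^ i) g₀) k]
        have : α ((α ^ k) g) = (α ^ (k + 1)) g := by rw [pow_succ']; rfl
        rw [this]
        simp [mul_comm, mul_assoc, mul_left_comm]
  have hαn' : ∀ g : G, (α ^ n) g = g := fun g => by rw [pow_orderOf_eq_one]; rfl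
  have hTn : T ^ n = Equiv.mulLeft f := by
    ext g
    rw [hTk n g, hαn' g]
    rfl
  have hmul : ∀ (m : ℕ), (Equiv.mulLeft f) ^ m = Equiv.mulLeft (f ^ m) := fun m => by
    induction m with
    | zero => simp
    | succ m ih => rw [pow_succ, pow_succ, ih]; ext g; simp [mul_assoc]
  set m := orderOf f with hm
  have hT1 : T ^ (n * m) = 1 := by
    rw [pow_mul, hTn, hmul, pow_orderOf_eq_one]
    ext g; simp
  have hn0 : 0 < n := orderOf_pos α
  have hm0 : 0 < m := orderOf_pos f
  have hdvd : orderOf T ∣ n * m := orderOf_dvd_of_pow_eq_one hT1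
  have hle : orderOf T ≤ n * m := Nat.le_of_dvd (Nat.mul_pos hn0 hm0) hdvd
  -- m ≤ sSup
  have hmem : m ∈ {k : ℕ | ∃ g : G, α g = g ∧ k = orderOf g} := ⟨f, hfix, rfl⟩
  have hbdd : BddAbove {k : ℕ | ∃ g : G, α g = g ∧ k = orderOf g} := by
    have hsub : {k : ℕ | ∃ g : G, α g = g ∧ k = orderOf g} ⊆ Set.range (orderOf : G → ℕ) := by
      rintro k ⟨g, _, rfl⟩; exact ⟨g, rfl⟩
    exact ((Set.finite_range _).subset hsub).bddAbove
  have hsup : m ≤ sSup {k : ℕ | ∃ g : G, α g = g ∧ k = orderOf g} := le_csSup hbdd hmem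
  calc orderOf T ≤ n * m := hle
    _ = m * n := Nat.mul_comm n m
    _ ≤ sSup {k : ℕ | ∃ g : G, α g = g ∧ k = orderOf g} * n := Nat.mul_le_mul_right n hsup
end

section
/- Let G be a finite group and N a characteristic subgroup of G. Then λ(G/N) ≥ λ(G), where λ(H) denotes the maximum over automorphisms β of H of the fraction of elements of H lying on a single cycle of β. -/
/-- The largest cycle length ("Λ-value") of a self-map of a set. -/
noncomputable def maxCycleLen {X : Type*} (f : X → X) : ℕ :=
  sSup (Set.range fun x => Function.minimalPeriod f x)

/-- `Λ(G)`: the maximum over automorphisms of `G` of the largest cycle length. -/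
noncomputable def groupMaxCycleLen (G : Type*) [Group G] : ℕ :=
  sSup {n : ℕ | ∃ α : MulAut G, n = maxCycleLen (α : G → G)}

lemma minPeriod_le_card {X : Type*} [Finite X] (f : X → X) (x : X) :
    Function.minimalPeriod f x ≤ Nat.card X := by
  have hinj : Function.Injective
      (fun i : Fin (Function.minimalPeriod f x) => f^[(i : ℕ)] x) := by
    intro i j hij
    exact Fin.ext (Function.iterate_injOn_Iio_minimalPeriod i.isLt j.isLt hij)
  calc Function.minimalPeriod f x = Nat.card (Fin (Function.minimalPeriod f x)) := by simp
    _ ≤ Nat.card X := Nat.card_le_card_of_injective _ hinj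

lemma mulAut_coe_pow {G : Type*} [Group G] (α : MulAut G) (n : ℕ) :
    ⇑(α ^ n) = (⇑α)^[n] := by
  induction n with
  | zero => rfl
  | succ n ih =>
    funext x
    rw [pow_succ, Function.iterate_succ, Function.comp_apply, ← ih]
    rfl

lemma mulAut_minPeriod_pos {G : Type*} [Group G] [Finite G] (α : MulAut G) (x : G) :
    0 < Function.minimalPeriod (⇑α) x := by
  have hf : Finite (MulAut G) :=
    Finite.of_injective (fun a : MulAut G => (a : G → G)) DFunLike.coe_injective
  have hpos : 0 < orderOf α := orderOf_pos α
  have hper : Function.IsPeriodicPt (⇑α) (orderOf α) x := by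
    show (⇑α)^[orderOf α] x = x
    rw [← mulAut_coe_pow, pow_orderOf_eq_one]
    rfl
  exact hper.minimalPeriod_pos hpos

lemma maxCycleLen_le_card {X : Type*} [Finite X] [Nonempty X] (f : X → X) :
    maxCycleLen f ≤ Nat.card X :=
  csSup_le (Set.range_nonempty _) (by rintro n ⟨x, rfl⟩; exact minPeriod_le_card f x)

lemma groupMaxCycleLen_le_card (G : Type*) [Group G] [Finite G] :
    groupMaxCycleLen G ≤ Nat.card G :=
  csSup_le ⟨maxCycleLen ((MulEquiv.refl G : MulAut G) : G → G), MulEquiv.refl G, rfl⟩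
    (by rintro n ⟨α, rfl⟩; exact maxCycleLen_le_card _)

lemma le_groupMaxCycleLen {G : Type*} [Group G] [Finite G] (α : MulAut G) (x : G) :
    Function.minimalPeriod (⇑α) x ≤ groupMaxCycleLen G := by
  have h1 : Function.minimalPeriod (⇑α) x ≤ maxCycleLen (α : G → G) :=
    le_csSup ⟨Nat.card G, by rintro n ⟨y, rfl⟩; exact minPeriod_le_card _ y⟩ ⟨x, rfl⟩
  refine h1.trans (le_csSup ?_ ⟨α, rfl⟩)
  exact ⟨Nat.card G, by rintro n ⟨β, rfl⟩; exact maxCycleLen_le_card _⟩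

lemma exists_groupMaxCycleLen {G : Type*} [Group G] [Finite G] :
    ∃ (α : MulAut G) (x : G),
      Function.minimalPeriod (⇑α) x = groupMaxCycleLen G := by
  have h1 : groupMaxCycleLen G ∈ {n : ℕ | ∃ α : MulAut G, n = maxCycleLen (α : G → G)} :=
    Nat.sSup_mem ⟨_, MulEquiv.refl G, rfl⟩
      ⟨Nat.card G, by rintro n ⟨α, rfl⟩; exact maxCycleLen_le_card _⟩
  obtain ⟨α, hα⟩ := h1
  have h2 : maxCycleLen (α : G → G) ∈ Set.range fun x => Function.minimalPeriod (⇑α) x :=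
    Nat.sSup_mem (Set.range_nonempty _)
      ⟨Nat.card G, by rintro n ⟨y, rfl⟩; exact minPeriod_le_card _ y⟩
  obtain ⟨x, hx⟩ := h2
  exact ⟨α, x, by simpa [← hα] using hx⟩

/-- Automorphism quotient transfer: for a characteristic subgroup `N` of a
finite group `G`, `λ(G/N) ≥ λ(G)`. -/
theorem stmt5 {G : Type*} [Group G] [Finite G] (N : Subgroup G) [N.Normal]
    [N.Characteristic] :
    (groupMaxCycleLen G : ℚ) / Nat.card G ≤
      (groupMaxCycleLen (G ⧸ N) : ℚ) / Nat.card (G ⧸ N) := by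
  obtain ⟨α, x, hx⟩ := exists_groupMaxCycleLen (G := G)
  set L := Function.minimalPeriod (⇑α) x with hL
  -- induced automorphism on the quotient
  have hmap : N.map (α : G →* G) = N :=
    Subgroup.characteristic_iff_map_eq.mp ‹N.Characteristic› α
  set β : MulAut (G ⧸ N) := QuotientGroup.congr N N α hmap with hβ
  have hsemi : Function.Semiconj (QuotientGroup.mk : G → G ⧸ N) (⇑α) (⇑β) := by
    intro y
    exact (QuotientGroup.congr_mk N N α hmap y).symm
  have hit : ∀ n y, (⇑β)^[n] (QuotientGroup.mk y) = QuotientGroup.mk ((⇑α)^[n] y) :=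
    fun n y => ((hsemi.iterate_right n) y).symm
  set d := Function.minimalPeriod (⇑β) (QuotientGroup.mk x : G ⧸ N) with hd
  have hdpos : 0 < d := mulAut_minPeriod_pos β _
  have hLper : Function.IsPeriodicPt (⇑α) L x :=
    Function.isPeriodicPt_minimalPeriod _ _
  have hdvd : d ∣ L := by
    have : Function.IsPeriodicPt (⇑β) L (QuotientGroup.mk x : G ⧸ N) := by
      show (⇑β)^[L] _ = _
      rw [hit L x, hLper]
    exact Function.IsPeriodicPt.minimalPeriod_dvd this
  -- injection from Fin (L / d) into N
  have hfix : ∀ i : ℕ, (⇑β)^[d * i] (QuotientGroup.mk x : G ⧸ N) = QuotientGroup.mk x := by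
    intro i
    rw [Function.iterate_mul]
    exact Function.iterate_fixed (Function.isPeriodicPt_minimalPeriod (⇑β) _) i
  have hmem : ∀ i : ℕ, x⁻¹ * (⇑α)^[d * i] x ∈ N := by
    intro i
    have := hfix i
    rw [hit] at this
    exact (QuotientGroup.eq (s := N)).mp this.symm
  have hinj : Function.Injective (fun i : Fin (L / d) => (⟨x⁻¹ * (⇑α)^[d * (i : ℕ)] x,
      hmem i⟩ : N)) := by
    intro i j hij
    simp only [Subtype.mk.injEq, mul_right_inj] at hij
    have hlt : ∀ k : Fin (L / d), d * (k : ℕ) < L := by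
      intro k
      calc d * (k : ℕ) < d * (L / d) := by
            exact (Nat.mul_lt_mul_left hdpos).mpr k.isLt
        _ = L := Nat.mul_div_cancel' hdvd
    have := Function.iterate_injOn_Iio_minimalPeriod (f := ⇑α) (x := x)
      (hlt i) (hlt j) hij
    exact Fin.ext (Nat.eq_of_mul_eq_mul_left hdpos this)
  have hcard : L / d ≤ Nat.card N := by
    calc L / d = Nat.card (Fin (L / d)) := by simp
      _ ≤ Nat.card N := Nat.card_le_card_of_injective _ hinj
  have hLle : L ≤ d * Nat.card N := by
    calc L = d * (L / d) := (Nat.mul_div_cancel' hdvd).symm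
      _ ≤ d * Nat.card N := Nat.mul_le_mul_left d hcard
  have hdle : d ≤ groupMaxCycleLen (G ⧸ N) := le_groupMaxCycleLen β _
  -- cardinalities
  have hGcard : Nat.card G = Nat.card (G ⧸ N) * Nat.card N :=
    Subgroup.card_eq_card_quotient_mul_card_subgroup N
  have hQpos : 0 < Nat.card (G ⧸ N) := Nat.card_pos
  have hNpos : 0 < Nat.card N := Nat.card_pos
  have hGpos : 0 < Nat.card G := Nat.card_pos
  rw [← hx]
  rw [div_le_div_iff₀ (by exact_mod_cast hGpos) (by exact_mod_cast hQpos)]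
  have : (L : ℚ) * Nat.card (G ⧸ N) ≤ (d * Nat.card N) * Nat.card (G ⧸ N) := by
    have := hLle
    have h2 : (L : ℚ) ≤ (d : ℚ) * Nat.card N := by exact_mod_cast hLle
    exact mul_le_mul_of_nonneg_right h2 (by positivity)
  refine this.trans ?_
  have h3 : ((d : ℚ)) ≤ (groupMaxCycleLen (G ⧸ N) : ℚ) := by exact_mod_cast hdle
  calc ((d : ℚ) * Nat.card N) * Nat.card (G ⧸ N)
      = (d : ℚ) * (Nat.card (G ⧸ N) * Nat.card N) := by ring
    _ = (d : ℚ) * Nat.card G := by rw [hGcard]; push_cast; ring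
    _ ≤ (groupMaxCycleLen (G ⧸ N) : ℚ) * Nat.card G :=
        mul_le_mul_of_nonneg_right h3 (by positivity)
end

section
/- Let G be a finite group and α an automorphism of G with λ(α) ≥ 1/2, where λ(α) is the fraction of elements of G lying on the largest cycle of α. Then some power of α inverts more than half of the elements of G; in particular l(G) > 1/2, where l(G) is the maximum over automorphisms β of G of the fraction of g ∈ G with β(g) = g⁻¹. -/
/-- If an automorphism `α` of a finite group `G` has `λ(α) ≥ 1/2`, then some
power of `α` inverts more than half of the elements of `G`; in particular `G`
has an automorphism inverting more than half of its elements (`l(G) > 1/2`). -/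
theorem stmt7 {G : Type*} [Group G] [Finite G] (α : MulAut G)
    (h : (maxCycleLen (α : G → G) : ℚ) / Nat.card G ≥ 1 / 2) :
    (∃ k : ℕ, 2 * Nat.card {g : G // (α ^ k) g = g⁻¹} > Nat.card G) ∧
    ∃ β : MulAut G, 2 * Nat.card {g : G // β g = g⁻¹} > Nat.card G := by
  classical
  have _inst := Fintype.ofFinite G
  set n := Nat.card G with hn
  have hn0 : 0 < n := Nat.card_pos
  set m := maxCycleLen (α : G → G) with hmdef
  have h2m : n ≤ 2 * m := by
    have hq : (0:ℚ) < n := by exact_mod_cast hn0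
    rw [ge_iff_le, le_div_iff₀ hq] at h
    have : (n:ℚ) ≤ 2 * m := by linarith
    exact_mod_cast this
  suffices hk : ∃ k, 2 * Nat.card {g : G // (α ^ k) g = g⁻¹} > n by
    obtain ⟨k, hk⟩ := hk
    exact ⟨⟨k, hk⟩, ⟨α ^ k, hk⟩⟩
  have hnF : Fintype.card G = n := by rw [hn, Nat.card_eq_fintype_card]
  by_cases hsmall : n ≤ 2
  · refine ⟨0, ?_⟩
    have hall : ∀ g : G, (α ^ 0) g = g⁻¹ := by
      intro g
      have hg : g ^ n = 1 := by rw [hn]; exact pow_card_eq_one'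
      have hg2 : g ^ 2 = 1 := by
        interval_cases n
        · rw [pow_one] at hg; rw [hg]; simp
        · exact hg
      have : g⁻¹ = g := by
        rw [← mul_eq_one_iff_inv_eq, ← pow_two, hg2]
      rw [this]; rfl
    have : Nat.card {g : G // (α ^ 0) g = g⁻¹} = n := by
      rw [Nat.card_congr (Equiv.subtypeUnivEquiv hall), hn]
    omega
  -- main case : n ≥ 3
  push_neg at hsmall
  have hmem : m ∈ Set.range fun x : G => Function.minimalPeriod (⇑α) x :=
    Nat.sSup_mem ⟨Function.minimalPeriod (⇑α) 1, Set.mem_range_self 1⟩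
      ((Set.finite_range _).bddAbove)
  obtain ⟨a, ha⟩ := hmem
  simp only at ha
  have hm2 : 2 ≤ m := by omega
  have hiter1 : ∀ i : ℕ, (⇑α)^[i] (1 : G) = 1 := by
    intro i; rw [← mulAut_coe_pow]; exact map_one (α ^ i)
  have hiterinj : ∀ i : ℕ, Function.Injective ((⇑α)^[i] : G → G) := by
    intro i; rw [← mulAut_coe_pow]; exact (α ^ i).injective
  have hiterinv : ∀ (i : ℕ) (g : G), (⇑α)^[i] g⁻¹ = ((⇑α)^[i] g)⁻¹ := by
    intro i g; rw [← mulAut_coe_pow]; exact map_inv (α ^ i) g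
  have ha1 : a ≠ 1 := by
    intro e
    have hfix : Function.IsPeriodicPt (⇑α) 1 (1 : G) := by
      show (⇑α)^[1] (1:G) = 1; exact hiter1 1
    have := hfix.minimalPeriod_le one_pos
    rw [← e, ha] at this
    omega
  set O : Finset G := (Finset.range m).image (fun i => (⇑α)^[i] a) with hO
  have hOcard : O.card = m := by
    rw [hO, Finset.card_image_of_injOn, Finset.card_range]
    intro i hi j hj hij
    simp only [Finset.coe_range, Set.mem_Iio] at hi hj
    exact Function.iterate_injOn_Iio_minimalPeriod (by rwa [ha]) (by rwa [ha]) hij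
  have h1O : (1 : G) ∉ O := by
    intro hmem1
    obtain ⟨i, _, hie⟩ := Finset.mem_image.1 hmem1
    exact ha1 (hiterinj i (by rw [hie, hiter1]))
  by_cases hinv : ∃ t : ℕ, (⇑α)^[t] a = a⁻¹
  · obtain ⟨t, ht⟩ := hinv
    refine ⟨t, ?_⟩
    have hpred : ∀ g ∈ insert (1 : G) O, (α ^ t) g = g⁻¹ := by
      intro g hg
      rcases Finset.mem_insert.1 hg with rfl | hg
      · simp
      · obtain ⟨i, _, rfl⟩ := Finset.mem_image.1 hg
        rw [mulAut_coe_pow]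
        calc (⇑α)^[t] ((⇑α)^[i] a) = (⇑α)^[i] ((⇑α)^[t] a) := by
              rw [← Function.iterate_add_apply, ← Function.iterate_add_apply, add_comm]
        _ = (⇑α)^[i] a⁻¹ := by rw [ht]
        _ = ((⇑α)^[i] a)⁻¹ := hiterinv i a
    have hcard : m + 1 ≤ Nat.card {g : G // (α ^ t) g = g⁻¹} := by
      rw [Nat.card_eq_fintype_card, Fintype.card_subtype]
      calc m + 1 = (insert (1 : G) O).card := by
            rw [Finset.card_insert_of_notMem h1O, hOcard]
      _ ≤ (Finset.filter (fun g => (α ^ t) g = g⁻¹) Finset.univ).card :=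
            Finset.card_le_card fun g hg =>
              Finset.mem_filter.2 ⟨Finset.mem_univ _, hpred g hg⟩
    omega
  · exfalso
    push_neg at hinv
    set O' : Finset G := O.image (fun g => g⁻¹) with hO'
    have hO'card : O'.card = m := by
      rw [hO', Finset.card_image_of_injective _ inv_injective, hOcard]
    have hdisj : Disjoint O O' := by
      rw [Finset.disjoint_left]
      intro g hgO hgO'
      obtain ⟨i, _, hie⟩ := Finset.mem_image.1 hgO
      obtain ⟨x, hx, hxe⟩ := Finset.mem_image.1 hgO'
      obtain ⟨j, _, hje⟩ := Finset.mem_image.1 hx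
      have key : (⇑α)^[i] a = (⇑α)^[j] a⁻¹ := by
        rw [hiterinv j a, hje, hxe, hie]
      rcases le_total j i with hji | hij
      · have : (⇑α)^[j] ((⇑α)^[i - j] a) = (⇑α)^[j] a⁻¹ := by
          rw [← Function.iterate_add_apply, Nat.add_sub_cancel' hji]; exact key
        exact hinv (i - j) (hiterinj j this)
      · have h1 : (⇑α)^[i] a = (⇑α)^[i] ((⇑α)^[j - i] a⁻¹) := by
          rw [← Function.iterate_add_apply, Nat.add_sub_cancel' hij]; exact key
        have h2 : a = (⇑α)^[j - i] a⁻¹ := hiterinj i h1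
        apply hinv (j - i)
        calc (⇑α)^[j - i] a = ((⇑α)^[j - i] a⁻¹)⁻¹ := by rw [hiterinv, inv_inv]
        _ = a⁻¹ := by rw [← h2]
    have hcover : O ∪ O' = Finset.univ := by
      apply Finset.eq_univ_of_card
      have h1 : (O ∪ O').card = m + m := by
        rw [Finset.card_union_of_disjoint hdisj, hOcard, hO'card]
      have h2 : (O ∪ O').card ≤ Fintype.card G := Finset.card_le_univ _
      omega
    have h1mem : (1 : G) ∈ O ∪ O' := hcover ▸ Finset.mem_univ 1
    rcases Finset.mem_union.1 h1mem with hmem1 | hmem1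
    · exact h1O hmem1
    · obtain ⟨g, hg, hge⟩ := Finset.mem_image.1 hmem1
      exact h1O (by rwa [inv_eq_one.1 hge] at hg)
end

section
/- Let e = (e₁,...,e_n) and f = (f₁,...,f_n) be nondecreasing tuples of nonnegative integers with e_i ≥ f_i and e_j - f_j ≤ e_i - f_i for all j ≤ i (downward compatibility). Let E = ∏ Z/p^{e_i}Z and F = ∏ Z/p^{f_i}Z, and let π: E → F be the product of the canonical projections. Then for every integer matrix A representing an automorphism α of E, A also represents an automorphism α̃ of F, ker(π) is α-invariant, and π∘α = α̃∘π. -/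
/-!
The projection `π : ∏ ℤ/p^{eᵢ} → ∏ ℤ/p^{fᵢ}` is surjective, so an automorphism `α` descends along
it as soon as `α` and `α⁻¹` preserve `ker π`, and the induced map has the same matrix as `α`.
The entries `c_{ij}` of any additive endomorphism satisfy `p^{eᵢ} ∣ p^{eⱼ} c_{ij}`, and `ker π`
consists of the `x` with `p^{fⱼ} ∣ xⱼ`; so it suffices that `p^{fᵢ} ∣ p^{fⱼ} c_{ij}`. This is clear
when `fᵢ ≤ fⱼ`; otherwise `j < i` since `f` is monotone, so downward compatibility gives
`fᵢ - fⱼ ≤ eᵢ - eⱼ`, while `p^{eᵢ - eⱼ} ∣ c_{ij}`.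
-/

theorem pow_dvd_pow_mul_of_sub_le {p : ℕ} [NeZero p] {a b a' b' c : ℕ} (ha : a' ≤ a) (hb : b' ≤ b)
    (hcompat : b' < a' → b - b' ≤ a - a') (h : p ^ a ∣ p ^ b * c) : p ^ a' ∣ p ^ b' * c := by
  rcases le_or_gt a' b' with hle | hlt
  · exact (pow_dvd_pow p hle).mul_right c
  · have hsub := hcompat hlt
    have hc : p ^ (a - b) ∣ c := by
      rw [← Nat.pow_sub_mul_pow p (show b ≤ a by omega), mul_comm] at h
      exact Nat.dvd_of_mul_dvd_mul_left (pow_pos (NeZero.pos p) b) h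
    rw [← Nat.pow_sub_mul_pow p hlt.le, mul_comm]
    exact mul_dvd_mul_left _ ((pow_dvd_pow p (by omega)).trans hc)

theorem AddMonoidHom.exists_addEquiv_comp_eq_comp {G H : Type*} [AddGroup G] [AddGroup H]
    (π : G →+ H) (hπ : Function.Surjective π) (α : G ≃+ G)
    (hα : π.ker ≤ (π.comp α.toAddMonoidHom).ker)
    (hα' : π.ker ≤ (π.comp α.symm.toAddMonoidHom).ker) :
    ∃ β : H ≃+ H, ∀ x, β (π x) = π (α x) := by
  set β := π.liftOfSurjective hπ ⟨_, hα⟩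
  set β' := π.liftOfSurjective hπ ⟨_, hα'⟩
  have hβ (x : G) : β (π x) = π (α x) := π.liftOfRightInverse_comp_apply _ _ _ x
  have hβ' (x : G) : β' (π x) = π (α.symm x) := π.liftOfRightInverse_comp_apply _ _ _ x
  refine ⟨β.toAddEquiv β' ?_ ?_, hβ⟩ <;>
  · refine (AddMonoidHom.cancel_right hπ).mp (AddMonoidHom.ext fun x => ?_)
    simp [hβ, hβ']

section

variable {p : ℕ} {ι : Type*} {e f : ι → ℕ}

noncomputable def piCastPow (hef : ∀ i, f i ≤ e i) : (∀ i, ZMod (p ^ e i)) →+ ∀ i, ZMod (p ^ f i) :=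
  AddMonoidHom.piMap fun i => (ZMod.castHom (pow_dvd_pow p (hef i)) _).toAddMonoidHom

theorem piCastPow_surjective (hef : ∀ i, f i ≤ e i) :
    Function.Surjective (piCastPow (p := p) hef) :=
  Function.Surjective.piMap fun i => ZMod.castHom_surjective (pow_dvd_pow p (hef i))

theorem piCastPow_single [DecidableEq ι] (hef : ∀ i, f i ≤ e i) (j : ι) :
    piCastPow (p := p) hef (Pi.single j 1) = Pi.single j 1 := by
  funext i
  exact Pi.apply_single (fun i => ZMod.castHom (pow_dvd_pow p (hef i)) (ZMod (p ^ f i)))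
    (fun i => map_zero _) j 1 i |>.trans (by rw [map_one])

theorem piCastPow_intCast (hef : ∀ i, f i ≤ e i) (m : ι → ℤ) :
    piCastPow (p := p) hef (fun i => (m i : ZMod (p ^ e i))) = fun i => (m i : ZMod (p ^ f i)) :=
  funext fun i => map_intCast (ZMod.castHom (pow_dvd_pow p (hef i)) _) _

variable [NeZero p]

theorem piCastPow_apply (hef : ∀ i, f i ≤ e i) (x : ∀ i, ZMod (p ^ e i)) (i : ι) :
    piCastPow hef x i = ((x i).val : ZMod (p ^ f i)) :=
  ZMod.cast_eq_val _

theorem AddMonoidHom.pow_dvd_pow_mul_val_apply_single [DecidableEq ι]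
    (γ : (∀ i, ZMod (p ^ e i)) →+ ∀ i, ZMod (p ^ e i)) (i j : ι) :
    p ^ e i ∣ p ^ e j * (γ (Pi.single j 1) i).val := by
  have h : (p ^ e j) • γ (Pi.single j 1) = 0 := by
    rw [← map_nsmul, ← Pi.single_smul, nsmul_eq_mul, mul_one, ZMod.natCast_self,
      Pi.single_zero, map_zero]
  have hi := congrFun h i
  rwa [Pi.smul_apply, ← ZMod.natCast_zmod_val (γ (Pi.single j 1) i), nsmul_eq_mul,
    ← Nat.cast_mul, Pi.zero_apply, ZMod.natCast_eq_zero_iff] at hi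

theorem AddMonoidHom.apply_eq_sum_val_smul [Fintype ι] [DecidableEq ι]
    (γ : (∀ i, ZMod (p ^ e i)) →+ ∀ i, ZMod (p ^ e i))
    (x : ∀ i, ZMod (p ^ e i)) : γ x = ∑ j, (x j).val • γ (Pi.single j 1) := by
  conv_lhs => rw [← Finset.univ_sum_single x]
  simp_rw [map_sum, ← map_nsmul, ← Pi.single_smul, nsmul_eq_mul, mul_one, ZMod.natCast_zmod_val]

theorem ker_piCastPow_le_ker_comp [Fintype ι] [DecidableEq ι] (hef : ∀ i, f i ≤ e i)
    (hcompat : ∀ i j, f j < f i → e j - f j ≤ e i - f i)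
    (γ : (∀ i, ZMod (p ^ e i)) →+ ∀ i, ZMod (p ^ e i)) :
    (piCastPow hef).ker ≤ ((piCastPow hef).comp γ).ker := by
  intro x hx
  rw [AddMonoidHom.mem_ker] at hx ⊢
  funext i
  rw [AddMonoidHom.comp_apply, γ.apply_eq_sum_val_smul, map_sum, Finset.sum_apply]
  refine Finset.sum_eq_zero fun j _ => ?_
  have hxj : p ^ f j ∣ (x j).val := by
    rw [← ZMod.natCast_eq_zero_iff, ← piCastPow_apply hef, hx, Pi.zero_apply]
  have hγ := pow_dvd_pow_mul_of_sub_le (hef i) (hef j) (hcompat i j)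
    (γ.pow_dvd_pow_mul_val_apply_single i j)
  rw [map_nsmul, Pi.smul_apply, piCastPow_apply, nsmul_eq_mul, ← Nat.cast_mul,
    ZMod.natCast_eq_zero_iff]
  exact hγ.trans (mul_dvd_mul_right hxj _)

end

theorem stmt8_general (p : ℕ) (hp : p.Prime) (n : ℕ) (e f : Fin n → ℕ)
    (hf : Monotone f) (hef : ∀ i, f i ≤ e i)
    (hcomp : ∀ i j : Fin n, j ≤ i → e j - f j ≤ e i - f i)
    (A : Matrix (Fin n) (Fin n) ℤ)
    (α : (∀ i, ZMod (p ^ e i)) ≃+ (∀ i, ZMod (p ^ e i)))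
    (hα : ∀ j, α (Pi.single j 1) = fun i => ((A i j : ℤ) : ZMod (p ^ e i))) :
    ∃ β : (∀ i, ZMod (p ^ f i)) ≃+ (∀ i, ZMod (p ^ f i)),
      (∀ j, β (Pi.single j 1) = fun i => ((A i j : ℤ) : ZMod (p ^ f i))) ∧
      (∀ x : ∀ i, ZMod (p ^ e i),
        β (fun i => ZMod.castHom (pow_dvd_pow p (hef i)) (ZMod (p ^ f i)) (x i)) =
          fun i => ZMod.castHom (pow_dvd_pow p (hef i)) (ZMod (p ^ f i)) (α x i)) ∧
      (∀ x : ∀ i, ZMod (p ^ e i),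
        (∀ i, ZMod.castHom (pow_dvd_pow p (hef i)) (ZMod (p ^ f i)) (x i) = 0) →
        ∀ i, ZMod.castHom (pow_dvd_pow p (hef i)) (ZMod (p ^ f i)) (α x i) = 0) := by
  have : NeZero p := ⟨hp.ne_zero⟩
  have hker := ker_piCastPow_le_ker_comp (p := p) hef fun i j h => hcomp i j (hf.reflect_lt h).le
  obtain ⟨β, hβ⟩ := (piCastPow hef).exists_addEquiv_comp_eq_comp (piCastPow_surjective hef) α
    (hker α.toAddMonoidHom) (hker α.symm.toAddMonoidHom)
  refine ⟨β, fun j => ?_, hβ, fun x hx => congrFun (hker α.toAddMonoidHom (funext hx))⟩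
  rw [← piCastPow_single (e := e) hef j, hβ, hα, piCastPow_intCast]

/-- Compatibility lemma (downward compatibility): if `e ≥ f` componentwise,
both nondecreasing, with `e_j - f_j ≤ e_i - f_i` for `j ≤ i`, then every
integer matrix `A` representing an automorphism `α` of `E = ∏ ℤ/p^{eᵢ}ℤ` also
represents an automorphism `β` of `F = ∏ ℤ/p^{fᵢ}ℤ`, the kernel of the
canonical projection `π : E → F` is `α`-invariant, and `π ∘ α = β ∘ π`. -/
theorem stmt8 (p : ℕ) (hp : p.Prime) (n : ℕ) (e f : Fin n → ℕ)
    (he : Monotone e) (hf : Monotone f) (hef : ∀ i, f i ≤ e i)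
    (hcomp : ∀ i j : Fin n, j ≤ i → e j - f j ≤ e i - f i)
    (A : Matrix (Fin n) (Fin n) ℤ)
    (α : (∀ i, ZMod (p ^ e i)) ≃+ (∀ i, ZMod (p ^ e i)))
    (hα : ∀ j, α (Pi.single j 1) = fun i => ((A i j : ℤ) : ZMod (p ^ e i))) :
    ∃ β : (∀ i, ZMod (p ^ f i)) ≃+ (∀ i, ZMod (p ^ f i)),
      (∀ j, β (Pi.single j 1) = fun i => ((A i j : ℤ) : ZMod (p ^ f i))) ∧
      (∀ x : ∀ i, ZMod (p ^ e i),
        β (fun i => ZMod.castHom (pow_dvd_pow p (hef i)) (ZMod (p ^ f i)) (x i)) =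
          fun i => ZMod.castHom (pow_dvd_pow p (hef i)) (ZMod (p ^ f i)) (α x i)) ∧
      (∀ x : ∀ i, ZMod (p ^ e i),
        (∀ i, ZMod.castHom (pow_dvd_pow p (hef i)) (ZMod (p ^ f i)) (x i) = 0) →
        ∀ i, ZMod.castHom (pow_dvd_pow p (hef i)) (ZMod (p ^ f i)) (α x i) = 0) :=
  stmt8_general p hp n e f hf hef hcomp A α hα
end

section
/- Let A be an n×n integer matrix, p a prime, and (e₁,...,e_n) a nondecreasing tuple of positive integers. If the assignment sending the j-th standard generator of ∏_{i=1}^n Z/p^{e_i}Z to ∑_i a_{i,j}·(i-th generator) extends to an endomorphism of this group, then p^{e_i - e_j} divides a_{i,j} for all 1 ≤ j ≤ i ≤ n. Conversely, if these divisibilities hold, the assignment extends to an endomorphism, and this endomorphism is an automorphism if and only if p does not divide det(A). -/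
section aux
variable {p : ℕ} {n : ℕ} {e : Fin n → ℕ} {A : Matrix (Fin n) (Fin n) ℤ}

/-- Existence of the conjugated integer matrix `B = D⁻¹ A D`. -/
lemma hr_exists_B (hp : p.Prime) (he : Monotone e)
    (hdiv : ∀ i j : Fin n, j ≤ i → (p : ℤ) ^ (e i - e j) ∣ A i j) :
    ∃ B : Matrix (Fin n) (Fin n) ℤ,
      (∀ i j, (p : ℤ) ^ (e i) * B i j = A i j * (p : ℤ) ^ (e j)) ∧ B.det = A.det := by
  have hp0 : (p : ℤ) ≠ 0 := Int.natCast_ne_zero.mpr hp.ne_zero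
  set B : Matrix (Fin n) (Fin n) ℤ := fun i j =>
    if h : j ≤ i then A i j / (p : ℤ) ^ (e i - e j)
      else A i j * (p : ℤ) ^ (e j - e i) with hBdef
  have hB : ∀ i j, (p : ℤ) ^ (e i) * B i j = A i j * (p : ℤ) ^ (e j) := by
    intro i j
    by_cases h : j ≤ i
    · have hee : e j ≤ e i := he h
      simp only [hBdef, h, dif_pos]
      rw [show (p:ℤ) ^ (e i) = (p:ℤ) ^ (e i - e j) * (p:ℤ) ^ (e j) by
        rw [← pow_add, Nat.sub_add_cancel hee]]
      rw [mul_comm ((p:ℤ) ^ (e i - e j)) _, mul_assoc]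
      rw [Int.mul_ediv_cancel' (hdiv i j h), mul_comm]
    · have hij : i ≤ j := le_of_not_ge h
      have hee : e i ≤ e j := he hij
      simp only [hBdef, h, dif_neg, not_false_iff]
      rw [show (p:ℤ) ^ (e j) = (p:ℤ) ^ (e j - e i) * (p:ℤ) ^ (e i) by
        rw [← pow_add, Nat.sub_add_cancel hee]]
      ring
  refine ⟨B, hB, ?_⟩
  set D : Matrix (Fin n) (Fin n) ℤ := Matrix.diagonal (fun i => (p:ℤ) ^ (e i)) with hDdef
  have hDB : D * B = A * D := by
    ext i j
    rw [hDdef, Matrix.diagonal_mul, Matrix.mul_diagonal]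
    exact hB i j
  have hDdet : D.det ≠ 0 := by
    rw [hDdef, Matrix.det_diagonal]
    exact Finset.prod_ne_zero_iff.mpr (fun i _ => pow_ne_zero _ hp0)
  have := congrArg Matrix.det hDB
  rw [Matrix.det_mul, Matrix.det_mul] at this
  exact mul_left_cancel₀ hDdet (by rw [this, mul_comm])

/-- The adjugate identity `adj A * D = D * adj B`. -/
lemma hr_adj (hp : p.Prime) {B : Matrix (Fin n) (Fin n) ℤ}
    (hB : ∀ i j, (p : ℤ) ^ (e i) * B i j = A i j * (p : ℤ) ^ (e j)) :
    A.adjugate * Matrix.diagonal (fun i => (p:ℤ) ^ (e i))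
      = Matrix.diagonal (fun i => (p:ℤ) ^ (e i)) * B.adjugate := by
  have hp0 : (p : ℤ) ≠ 0 := Int.natCast_ne_zero.mpr hp.ne_zero
  set D : Matrix (Fin n) (Fin n) ℤ := Matrix.diagonal (fun i => (p:ℤ) ^ (e i)) with hDdef
  have hDB : D * B = A * D := by
    ext i j
    rw [hDdef, Matrix.diagonal_mul, Matrix.mul_diagonal]
    exact hB i j
  have hDdet : D.det ≠ 0 := by
    rw [hDdef, Matrix.det_diagonal]
    exact Finset.prod_ne_zero_iff.mpr (fun i _ => pow_ne_zero _ hp0)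
  have hadj := congrArg Matrix.adjugate hDB
  rw [Matrix.adjugate_mul_distrib, Matrix.adjugate_mul_distrib] at hadj
  -- hadj : B.adjugate * D.adjugate = D.adjugate * A.adjugate
  have key : D.det • (D * B.adjugate) = D.det • (A.adjugate * D) := by
    calc D.det • (D * B.adjugate) = D * B.adjugate * (D.adjugate * D) := by
          rw [Matrix.adjugate_mul, Matrix.mul_smul, Matrix.mul_one]
      _ = D * (B.adjugate * D.adjugate) * D := by noncomm_ring
      _ = D * (D.adjugate * A.adjugate) * D := by rw [hadj]
      _ = (D * D.adjugate) * (A.adjugate * D) := by noncomm_ring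
      _ = D.det • (A.adjugate * D) := by
          rw [Matrix.mul_adjugate, Matrix.smul_mul, Matrix.one_mul]
  exact (smul_right_injective _ hDdet key).symm

/-- Injectivity core: if `p ∤ det A` then `A x ≡ 0 mod D` implies `x ≡ 0 mod D`. -/
lemma hr_inj (hp : p.Prime) (he : Monotone e)
    (hdiv : ∀ i j : Fin n, j ≤ i → (p : ℤ) ^ (e i - e j) ∣ A i j)
    (hdet : ¬ (p : ℤ) ∣ A.det) (c : Fin n → ℤ)
    (hc : ∀ i, (p : ℤ) ^ (e i) ∣ ∑ j, A i j * c j) :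
    ∀ j, (p : ℤ) ^ (e j) ∣ c j := by
  obtain ⟨B, hB, hBdet⟩ := hr_exists_B hp he hdiv
  have hadj := hr_adj hp hB
  set D : Matrix (Fin n) (Fin n) ℤ := Matrix.diagonal (fun i => (p:ℤ) ^ (e i)) with hDdef
  choose y hy using hc
  have hAc : A.mulVec c = D.mulVec y := by
    funext i
    rw [Matrix.mulVec_diagonal]
    rw [Matrix.mulVec, dotProduct]
    exact hy i
  have h2 : A.det • c = D.mulVec (B.adjugate.mulVec y) := by
    calc A.det • c = (A.det • (1 : Matrix (Fin n) (Fin n) ℤ)).mulVec c := by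
          rw [Matrix.smul_mulVec, Matrix.one_mulVec]
      _ = (A.adjugate * A).mulVec c := by rw [Matrix.adjugate_mul]
      _ = A.adjugate.mulVec (A.mulVec c) := by rw [Matrix.mulVec_mulVec]
      _ = A.adjugate.mulVec (D.mulVec y) := by rw [hAc]
      _ = (A.adjugate * D).mulVec y := by rw [Matrix.mulVec_mulVec]
      _ = (D * B.adjugate).mulVec y := by rw [hadj]
      _ = D.mulVec (B.adjugate.mulVec y) := by rw [Matrix.mulVec_mulVec]
  intro j
  have h3 : A.det * c j = (p : ℤ) ^ (e j) * (B.adjugate.mulVec y) j := by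
    have := congrFun h2 j
    rwa [Pi.smul_apply, smul_eq_mul, Matrix.mulVec_diagonal] at this
  have hcop : IsCoprime ((p : ℤ) ^ (e j)) A.det :=
    (((Nat.prime_iff_prime_int.mp hp).coprime_iff_not_dvd).mpr hdet).pow_left
  exact hcop.dvd_of_dvd_mul_left ⟨_, h3⟩

/-- Kernel element construction when `p ∣ det A`. -/
lemma hr_ker (hp : p.Prime) (he : Monotone e) (hpos : ∀ i, 0 < e i)
    (hdiv : ∀ i j : Fin n, j ≤ i → (p : ℤ) ^ (e i - e j) ∣ A i j)
    (hdet : (p : ℤ) ∣ A.det) :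
    ∃ c : Fin n → ℤ, (∀ i, (p : ℤ) ^ (e i) ∣ ∑ j, A i j * c j) ∧
      ∃ j, ¬ ((p : ℤ) ^ (e j) ∣ c j) := by
  have hp0 : (p : ℤ) ≠ 0 := Int.natCast_ne_zero.mpr hp.ne_zero
  haveI : Fact p.Prime := ⟨hp⟩
  obtain ⟨B, hB, hBdet⟩ := hr_exists_B hp he hdiv
  set Bp : Matrix (Fin n) (Fin n) (ZMod p) := B.map (Int.castRingHom (ZMod p)) with hBp
  have hdetBp : Bp.det = 0 := by
    rw [hBp, ← RingHom.mapMatrix_apply, ← RingHom.map_det, hBdet]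
    exact (ZMod.intCast_zmod_eq_zero_iff_dvd _ _).mpr hdet
  obtain ⟨v, hv0, hv⟩ := Matrix.exists_mulVec_eq_zero_iff.mpr hdetBp
  set w : Fin n → ℤ := fun j => ((v j).val : ℤ) with hwdef
  have hwv : ∀ j, ((w j : ℤ) : ZMod p) = v j := by
    intro j
    rw [hwdef]
    push_cast
    exact ZMod.natCast_rightInverse (v j)
  set c : Fin n → ℤ := fun j => (p : ℤ) ^ (e j - 1) * w j with hcdef
  have hAc : ∀ i j, A i j * c j = (p : ℤ) ^ (e i - 1) * (B i j * w j) := by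
    intro i j
    have h1 : (p:ℤ) * ((p:ℤ) ^ (e i - 1) * (B i j * w j))
        = (p:ℤ) * (A i j * c j) := by
      rw [hcdef]
      have hei : (p:ℤ) * (p:ℤ) ^ (e i - 1) = (p:ℤ) ^ (e i) := by
        rw [← pow_succ', Nat.sub_add_cancel (hpos i)]
      have hej : (p:ℤ) * (p:ℤ) ^ (e j - 1) = (p:ℤ) ^ (e j) := by
        rw [← pow_succ', Nat.sub_add_cancel (hpos j)]
      calc (p:ℤ) * ((p:ℤ) ^ (e i - 1) * (B i j * w j))
          = ((p:ℤ) ^ (e i) * B i j) * w j := by rw [← hei]; ring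
        _ = (A i j * (p:ℤ) ^ (e j)) * w j := by rw [hB]
        _ = (p:ℤ) * (A i j * ((p:ℤ) ^ (e j - 1) * w j)) := by rw [← hej]; ring
    exact (mul_left_cancel₀ hp0 h1).symm
  refine ⟨c, fun i => ?_, ?_⟩
  · have hsum : ∑ j, A i j * c j = (p : ℤ) ^ (e i - 1) * ∑ j, B i j * w j := by
      rw [Finset.mul_sum]
      exact Finset.sum_congr rfl fun j _ => hAc i j
    have hpdvd : (p : ℤ) ∣ ∑ j, B i j * w j := by
      rw [← ZMod.intCast_zmod_eq_zero_iff_dvd]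
      push_cast
      have : ∀ j : Fin n, ((B i j : ZMod p)) * ((w j : ZMod p)) = Bp i j * v j := by
        intro j
        rw [hwv j, hBp]
        rfl
      rw [Finset.sum_congr rfl fun j _ => this j]
      exact congrFun hv i
    obtain ⟨t, ht⟩ := hpdvd
    refine ⟨t, ?_⟩
    rw [hsum, ht, ← mul_assoc, ← pow_succ, Nat.sub_add_cancel (hpos i)]
  · obtain ⟨j, hj⟩ := Function.ne_iff.mp hv0
    refine ⟨j, fun hdj => hj ?_⟩
    rw [hcdef] at hdj
    have : (p:ℤ) ^ (e j) = (p:ℤ) ^ (e j - 1) * (p:ℤ) := by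
      rw [← pow_succ, Nat.sub_add_cancel (hpos j)]
    rw [this] at hdj
    have hpw : (p:ℤ) ∣ w j :=
      (mul_dvd_mul_iff_left (pow_ne_zero (e j - 1) hp0)).mp hdj
    rw [← hwv j]
    exact (ZMod.intCast_zmod_eq_zero_iff_dvd _ _).mpr hpw

end aux


/-- Hillar–Rhea: an integer matrix `A` represents an endomorphism of
`∏ᵢ ℤ/p^{eᵢ}ℤ` (sending the `j`-th standard generator to `∑ᵢ aᵢⱼ·vᵢ`) iff
`p^{eᵢ-eⱼ} ∣ aᵢⱼ` for all `j ≤ i`; and it represents an automorphism iff in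
addition `p ∤ det A`. -/
theorem stmt9 (p : ℕ) (hp : p.Prime) (n : ℕ) (e : Fin n → ℕ)
    (he : Monotone e) (hpos : ∀ i, 0 < e i)
    (A : Matrix (Fin n) (Fin n) ℤ) :
    ((∃ φ : (∀ i, ZMod (p ^ e i)) →+ (∀ i, ZMod (p ^ e i)),
        ∀ j, φ (Pi.single j 1) = fun i => ((A i j : ℤ) : ZMod (p ^ e i))) ↔
      ∀ i j : Fin n, j ≤ i → (p : ℤ) ^ (e i - e j) ∣ A i j) ∧
    ((∃ α : (∀ i, ZMod (p ^ e i)) ≃+ (∀ i, ZMod (p ^ e i)),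
        ∀ j, α (Pi.single j 1) = fun i => ((A i j : ℤ) : ZMod (p ^ e i))) ↔
      (∀ i j : Fin n, j ≤ i → (p : ℤ) ^ (e i - e j) ∣ A i j) ∧ ¬ (p : ℤ) ∣ A.det) := by
  haveI : Fact p.Prime := ⟨hp⟩
  haveI hNZ : ∀ i, NeZero (p ^ e i) := fun i => ⟨pow_ne_zero _ hp.ne_zero⟩
  have hp0 : (p : ℤ) ≠ 0 := Int.natCast_ne_zero.mpr hp.ne_zero
  -- decomposition of integer-cast vectors in terms of the standard generators
  have hdecomp : ∀ c : Fin n → ℤ,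
      (fun j => ((c j : ℤ) : ZMod (p ^ e j)))
        = ∑ j, c j • (Pi.single j 1 : ∀ i, ZMod (p ^ e i)) := by
    intro c
    funext i
    rw [Finset.sum_apply]
    rw [Finset.sum_eq_single i (fun j _ hji => by
      rw [Pi.smul_apply, Pi.single_eq_of_ne' hji, smul_zero])
      (fun h => absurd (Finset.mem_univ i) h)]
    rw [Pi.smul_apply, Pi.single_eq_same, zsmul_eq_mul, mul_one]
  have hval : ∀ x : (∀ i, ZMod (p ^ e i)),
      x = fun j => (((x j).val : ℤ) : ZMod (p ^ e j)) := by
    intro x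
    funext j
    push_cast
    exact (ZMod.natCast_rightInverse (x j)).symm
  -- computation of any endomorphism matching the generators on arbitrary elements
  have hcompute : ∀ (ψ : (∀ i, ZMod (p ^ e i)) →+ (∀ i, ZMod (p ^ e i))),
      (∀ j, ψ (Pi.single j 1) = fun i => ((A i j : ℤ) : ZMod (p ^ e i))) →
      ∀ (c : Fin n → ℤ) (i : Fin n),
        ψ (fun j => ((c j : ℤ) : ZMod (p ^ e j))) i
          = ((∑ j, A i j * c j : ℤ) : ZMod (p ^ e i)) := by
    intro ψ hψ c i
    rw [hdecomp c, map_sum, Finset.sum_apply]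
    rw [show ((∑ j, A i j * c j : ℤ) : ZMod (p ^ e i))
        = ∑ j, ((A i j * c j : ℤ) : ZMod (p ^ e i)) by push_cast; rfl]
    refine Finset.sum_congr rfl fun j _ => ?_
    rw [map_zsmul, Pi.smul_apply, hψ j, zsmul_eq_mul]
    push_cast
    ring
  -- forward direction of the first equivalence
  have fwd : (∃ φ : (∀ i, ZMod (p ^ e i)) →+ (∀ i, ZMod (p ^ e i)),
      ∀ j, φ (Pi.single j 1) = fun i => ((A i j : ℤ) : ZMod (p ^ e i))) →
      ∀ i j : Fin n, j ≤ i → (p : ℤ) ^ (e i - e j) ∣ A i j := by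
    rintro ⟨φ, hφ⟩ i j hij
    set c : Fin n → ℤ := fun j' => if j' = j then (p : ℤ) ^ (e j) else 0 with hcdef
    have hzero : (fun j' => ((c j' : ℤ) : ZMod (p ^ e j'))) = 0 := by
      funext j'
      by_cases h : j' = j
      · subst h
        simp only [hcdef, if_pos rfl, Pi.zero_apply]
        rw [ZMod.intCast_zmod_eq_zero_iff_dvd]
        push_cast
        exact dvd_rfl
      · simp [hcdef, h]
    have h1 := hcompute φ hφ c i
    rw [hzero, map_zero, Pi.zero_apply] at h1
    have hsum : ∑ j', A i j' * c j' = A i j * (p : ℤ) ^ (e j) := by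
      rw [hcdef]
      simp [Finset.sum_ite_eq', mul_ite]
    rw [hsum] at h1
    have h2 : ((p ^ e i : ℕ) : ℤ) ∣ A i j * (p : ℤ) ^ (e j) :=
      (ZMod.intCast_zmod_eq_zero_iff_dvd _ _).mp h1.symm
    push_cast at h2
    have hee : e j ≤ e i := he hij
    rw [show (p : ℤ) ^ (e i) = (p : ℤ) ^ (e i - e j) * (p : ℤ) ^ (e j) by
      rw [← pow_add, Nat.sub_add_cancel hee]] at h2
    exact (mul_dvd_mul_iff_right (pow_ne_zero (e j) hp0)).mp h2
  -- backward direction of the first equivalence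
  have bwd : (∀ i j : Fin n, j ≤ i → (p : ℤ) ^ (e i - e j) ∣ A i j) →
      ∃ φ : (∀ i, ZMod (p ^ e i)) →+ (∀ i, ZMod (p ^ e i)),
      ∀ j, φ (Pi.single j 1) = fun i => ((A i j : ℤ) : ZMod (p ^ e i)) := by
    intro hdiv
    have hcond : ∀ i j : Fin n, (p : ℤ) ^ (e i) ∣ (p : ℤ) ^ (e j) * A i j := by
      intro i j
      rcases le_total j i with h | h
      · have hee : e j ≤ e i := he h
        rw [show (p : ℤ) ^ (e i) = (p : ℤ) ^ (e i - e j) * (p : ℤ) ^ (e j) by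
          rw [← pow_add, Nat.sub_add_cancel hee]]
        rw [mul_comm ((p : ℤ) ^ (e j)) (A i j)]
        exact mul_dvd_mul (hdiv i j h) dvd_rfl
      · exact dvd_mul_of_dvd_left (pow_dvd_pow _ (he h)) _
    have hcond' : ∀ i j : Fin n,
        (zmultiplesHom _ ((A i j : ℤ) : ZMod (p ^ e i))) ((p ^ e j : ℕ) : ℤ) = 0 := by
      intro i j
      show ((p ^ e j : ℕ) : ℤ) • ((A i j : ℤ) : ZMod (p ^ e i)) = 0
      rw [zsmul_eq_mul, ← Int.cast_mul, ZMod.intCast_zmod_eq_zero_iff_dvd]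
      push_cast
      exact hcond i j
    set g : ∀ _ : Fin n, ∀ j : Fin n, ZMod (p ^ e j) →+ ZMod (p ^ e _) :=
      fun i j => ZMod.lift (p ^ e j)
        ⟨zmultiplesHom _ ((A i j : ℤ) : ZMod (p ^ e i)), hcond' i j⟩ with hgdef
    refine ⟨AddMonoidHom.mk' (fun x i => ∑ j, g i j (x j)) (fun x y => by
      funext i
      simp [map_add, Finset.sum_add_distrib]), ?_⟩
    intro j
    funext i
    show ∑ j', g i j' ((Pi.single j 1 : ∀ k, ZMod (p ^ e k)) j') = ((A i j : ℤ) : ZMod (p ^ e i))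
    rw [Finset.sum_eq_single j (fun j' _ hj' => by
        rw [Pi.single_eq_of_ne hj', map_zero])
      (fun h => absurd (Finset.mem_univ j) h)]
    rw [Pi.single_eq_same, hgdef]
    rw [show (1 : ZMod (p ^ e j)) = ((1 : ℤ) : ZMod (p ^ e j)) by push_cast; rfl]
    rw [ZMod.lift_coe]
    show (1 : ℤ) • ((A i j : ℤ) : ZMod (p ^ e i)) = _
    rw [one_zsmul]
  refine ⟨⟨fwd, bwd⟩, ?_, ?_⟩
  · rintro ⟨α, hα⟩
    have hα' : ∀ j, α.toAddMonoidHom (Pi.single j 1)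
        = fun i => ((A i j : ℤ) : ZMod (p ^ e i)) := fun j => hα j
    have hdiv := fwd ⟨α.toAddMonoidHom, hα'⟩
    refine ⟨hdiv, fun hdet => ?_⟩
    obtain ⟨c, hc, j, hj⟩ := hr_ker hp he hpos hdiv hdet
    set x : ∀ i, ZMod (p ^ e i) := fun j' => ((c j' : ℤ) : ZMod (p ^ e j')) with hxdef
    have hax : α x = 0 := by
      funext i
      have h1 := hcompute α.toAddMonoidHom hα' c i
      have h2 : ((∑ j', A i j' * c j' : ℤ) : ZMod (p ^ e i)) = 0 := by
        rw [ZMod.intCast_zmod_eq_zero_iff_dvd]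
        push_cast
        exact hc i
      rw [h2] at h1
      show α x i = 0
      exact h1
    have hx0 : x = 0 := α.injective (by rw [hax, map_zero])
    apply hj
    have hxj : ((c j : ℤ) : ZMod (p ^ e j)) = 0 := by
      have := congrFun hx0 j
      rw [hxdef] at this
      exact this
    have hd := (ZMod.intCast_zmod_eq_zero_iff_dvd _ _).mp hxj
    push_cast at hd
    exact hd
  · rintro ⟨hdiv, hdet⟩
    obtain ⟨φ, hφ⟩ := bwd hdiv
    have hker : ∀ x : (∀ i, ZMod (p ^ e i)), φ x = 0 → x = 0 := by
      intro x hx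
      have hdvd : ∀ i, (p : ℤ) ^ (e i) ∣ ∑ j, A i j * ((x j).val : ℤ) := by
        intro i
        have h1 := hcompute φ hφ (fun j => ((x j).val : ℤ)) i
        rw [← hval x, hx, Pi.zero_apply] at h1
        have := (ZMod.intCast_zmod_eq_zero_iff_dvd _ _).mp h1.symm
        push_cast at this
        exact this
      have hall := hr_inj hp he hdiv hdet _ hdvd
      funext j
      have hj := hall j
      have h0 : (((x j).val : ℤ) : ZMod (p ^ e j)) = 0 := by
        rw [ZMod.intCast_zmod_eq_zero_iff_dvd]
        push_cast
        exact hj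
      have hxj : x j = (((x j).val : ℤ) : ZMod (p ^ e j)) := congrFun (hval x) j
      exact hxj.trans h0
    haveI : ∀ i, Finite (ZMod (p ^ e i)) := fun i => Finite.of_fintype _
    have hinj : Function.Injective φ := (injective_iff_map_eq_zero φ).mpr hker
    have hbij : Function.Bijective φ := Finite.injective_iff_bijective.mp hinj
    refine ⟨AddEquiv.ofBijective φ hbij, fun j => ?_⟩
    show φ (Pi.single j 1) = _
    exact hφ j
end

section
/- Let p be a prime and n, e positive integers. Then the maximum order of an automorphism of (Z/p^eZ)^n is at most p^(e-1)·(p^n - 1). In particular, if n ≥ 2 and e ≥ 2, then every automorphism of (Z/p^eZ)^n has order strictly less than half the group order, so λ((Z/p^eZ)^n) < 1/2. -/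
/-!
An automorphism of `(ℤ/p^eℤ)^n` is an invertible matrix `A` over `ℤ/p^eℤ`. Modulo `p`, the
powers of `A` live in the ring `𝔽_p[A]`, which by Cayley–Hamilton has at most `p^n` elements,
one of which (`0`) is not a power of `A`; so `m := ord(A mod p) < p^n`. Then `A^m = 1 + pB`, and
the binomial theorem gives `(1 + pB)^(p^(e-1)) ≡ 1 mod p^e`, so `ord A ≤ m·p^(e-1)`. Every cycle
length divides `ord A`, and `2·p^(e-1)(p^n - 1) < p^(e+n) ≤ p^(en)` once `n, e ≥ 2`.
-/

open Polynomial

theorem maxCycleLen_le_of_iterate_eq_id {X : Type*} {f : X → X} {k : ℕ} (hk : 0 < k)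
    (hf : f^[k] = id) : maxCycleLen f ≤ k :=
  csSup_le' <| Set.forall_mem_range.2 fun x =>
    Function.IsPeriodicPt.minimalPeriod_le hk (congrFun hf x)

theorem AddAut.coe_nsmul {A : Type*} [Add A] (k : ℕ) (α : AddAut A) :
    ⇑(k • α) = (⇑α)^[k] := by
  induction k with
  | zero => rfl
  | succ k ih => rw [succ_nsmul, AddAut.coe_add, ih, Function.iterate_succ]

theorem AddAut.maxCycleLen_le_addOrderOf {A : Type*} [AddGroup A] [Finite A] (α : AddAut A) :
    maxCycleLen α ≤ addOrderOf α :=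
  maxCycleLen_le_of_iterate_eq_id (addOrderOf_pos α) <| by
    rw [← AddAut.coe_nsmul, addOrderOf_nsmul_eq_zero, AddAut.coe_zero]

theorem Polynomial.surjective_aeval_degreeLT {F A : Type*} [CommRing F] [Nontrivial F] [Ring A]
    [Algebra F A] {a : A} {f : F[X]} (hf : f.Monic) (ha : aeval a f = 0) :
    Function.Surjective fun g : degreeLT F f.natDegree =>
      (⟨aeval a g.1, g.1, rfl⟩ : (aeval (R := F) a).range) := by
  rintro ⟨_, g, rfl⟩
  refine ⟨⟨g %ₘ f, mem_degreeLT.2 ?_⟩, Subtype.ext (aeval_modByMonic_eq_self_of_root ha)⟩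
  rw [← degree_eq_natDegree hf.ne_zero]
  exact degree_modByMonic_lt g hf

theorem orderOf_lt_card_pow_natDegree {F A : Type*} [CommRing F] [Nontrivial F] [Finite F]
    [Ring A] [Nontrivial A] [Algebra F A] {a : A} {f : F[X]} (hf : f.Monic) (ha : aeval a f = 0) :
    orderOf a < Nat.card F ^ f.natDegree := by
  have hsurj := surjective_aeval_degreeLT hf ha
  have : Finite (degreeLT F f.natDegree) := .of_equiv _ (degreeLTEquiv F _).toEquiv.symm
  have : Finite (aeval (R := F) a).range := .of_surjective _ hsurj
  calc orderOf a = orderOf (⟨a, X, aeval_X a⟩ : (aeval (R := F) a).range) :=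
        orderOf_injective (aeval (R := F) a).range.val.toMonoidHom Subtype.val_injective
          ⟨a, X, aeval_X a⟩
    _ < Nat.card (aeval (R := F) a).range := orderOf_lt_card _
    _ ≤ Nat.card (degreeLT F f.natDegree) := Nat.card_le_card_of_surjective _ hsurj
    _ = Nat.card F ^ f.natDegree := by
        rw [Nat.card_congr (degreeLTEquiv F _).toEquiv, Nat.card_fun, Nat.card_fin]

theorem Matrix.orderOf_lt_card_pow {F ι : Type*} [CommRing F] [Nontrivial F] [Finite F]
    [Fintype ι] [DecidableEq ι] [Nonempty ι] (M : Matrix ι ι F) :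
    orderOf M < Nat.card F ^ Fintype.card ι := by
  simpa only [M.charpoly_natDegree_eq_dim] using
    orderOf_lt_card_pow_natDegree M.charpoly_monic M.aeval_self_charpoly

theorem one_add_natCast_mul_pow_pow_eq_one {A : Type*} [Ring A] {p e : ℕ} (he : e ≠ 0)
    (hpe : (p : A) ^ e = 0) (b : A) : (1 + p * b) ^ p ^ (e - 1) = 1 := by
  -- `A` need not be commutative, so compute in `ℤ[X]` and evaluate at `b`.
  obtain ⟨q, hq⟩ : (p : ℤ[X]) ^ e ∣ (1 + (p : ℤ[X]) * X) ^ p ^ (e - 1) - 1 := by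
    simpa [Nat.sub_add_cancel (Nat.pos_of_ne_zero he)] using
      dvd_sub_pow_of_dvd_sub (R := ℤ[X]) (p := p) (a := 1 + (p : ℤ[X]) * X) (b := 1) (by simp)
        (e - 1)
  simpa [hpe, sub_eq_zero] using congrArg (aeval b) hq

theorem ZMod.exists_eq_natCast_mul_of_castHom_eq_zero {m n : ℕ} (hmn : m ∣ n) {r : ZMod n}
    (hr : ZMod.castHom hmn (ZMod m) r = 0) : ∃ s, r = m * s := by
  obtain ⟨k, rfl⟩ := ZMod.intCast_surjective r
  obtain ⟨t, rfl⟩ := (ZMod.intCast_zmod_eq_zero_iff_dvd k m).1 (by simpa using hr)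
  exact ⟨t, by push_cast; ring⟩

namespace Matrix

variable {ι : Type*} [Fintype ι] [DecidableEq ι]

theorem exists_eq_natCast_mul_of_map_castHom_eq_zero {m n : ℕ} (hmn : m ∣ n)
    {N : Matrix ι ι (ZMod n)} (hN : N.map (ZMod.castHom hmn (ZMod m)) = 0) :
    ∃ B : Matrix ι ι (ZMod n), N = m * B := by
  choose s hs using fun i j =>
    ZMod.exists_eq_natCast_mul_of_castHom_eq_zero hmn (congrFun (congrFun hN i) j)
  refine ⟨of s, ?_⟩
  ext i j
  rw [← nsmul_eq_mul, smul_apply, nsmul_eq_mul]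
  exact hs i j

theorem orderOf_dvd_orderOf_map_castHom_mul {p e : ℕ} (he : e ≠ 0)
    (M : Matrix ι ι (ZMod (p ^ e))) :
    orderOf M ∣ orderOf (M.map (ZMod.castHom (dvd_pow_self p he) (ZMod p))) * p ^ (e - 1) := by
  set m := orderOf (M.map (ZMod.castHom (dvd_pow_self p he) (ZMod p)))
  have hker : (M ^ m - 1).map (ZMod.castHom (dvd_pow_self p he) (ZMod p)) = 0 := by
    rw [← RingHom.mapMatrix_apply, map_sub, map_pow, RingHom.mapMatrix_apply, pow_orderOf_eq_one,
      map_one, sub_self]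
  obtain ⟨B, hB⟩ := exists_eq_natCast_mul_of_map_castHom_eq_zero _ hker
  have hpe : (p : Matrix ι ι (ZMod (p ^ e))) ^ e = 0 := by
    rw [← Nat.cast_pow, ← map_natCast (algebraMap (ZMod (p ^ e)) _), ZMod.natCast_self,
      map_zero]
  refine orderOf_dvd_of_pow_eq_one ?_
  rw [pow_mul, eq_add_of_sub_eq hB, add_comm]
  exact one_add_natCast_mul_pow_pow_eq_one he hpe B

theorem orderOf_le_of_zmod_pow [Nonempty ι] {p e : ℕ} (hp : 1 < p) (he : e ≠ 0)
    {M : Matrix ι ι (ZMod (p ^ e))} (hM : 0 < orderOf M) :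
    orderOf M ≤ p ^ (e - 1) * (p ^ Fintype.card ι - 1) := by
  have : Fact (1 < p) := ⟨hp⟩
  set reduce := (ZMod.castHom (dvd_pow_self p he) (ZMod p)).mapMatrix (m := ι)
  set M₀ := M.map (ZMod.castHom (dvd_pow_self p he) (ZMod p))
  have hM₀_pos : 0 < orderOf M₀ := Nat.pos_of_dvd_of_pos (orderOf_map_dvd reduce.toMonoidHom M) hM
  have hM₀_lt : orderOf M₀ < p ^ Fintype.card ι := by
    simpa only [Nat.card_zmod] using M₀.orderOf_lt_card_pow
  calc orderOf M ≤ orderOf M₀ * p ^ (e - 1) :=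
        Nat.le_of_dvd (by positivity) (M.orderOf_dvd_orderOf_map_castHom_mul he)
    _ ≤ p ^ (e - 1) * (p ^ Fintype.card ι - 1) := by
        rw [mul_comm]; gcongr; omega

end Matrix

def AddAut.toMatrix (ι : Type*) [Fintype ι] [DecidableEq ι] (m : ℕ) :
    Multiplicative (AddAut (ι → ZMod m)) →* Matrix ι ι (ZMod m) where
  toFun α := LinearMap.toMatrix' ((Multiplicative.toAdd α).toAddMonoidHom.toZModLinearMap m)
  map_one' := LinearMap.toMatrix'_id
  map_mul' _ _ := by
    rw [← LinearMap.toMatrix'_mul]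
    rfl

theorem AddAut.toMatrix_injective (ι : Type*) [Fintype ι] [DecidableEq ι] (m : ℕ) :
    Function.Injective (AddAut.toMatrix ι m) := fun _ _ h =>
  Multiplicative.toAdd.injective <| AddEquiv.ext fun x => DFunLike.congr_fun
    (AddMonoidHom.toZModLinearMap_injective m (LinearMap.toMatrix'.injective h)) x

theorem AddAut.addOrderOf_le_of_zmod_pow {ι : Type*} [Fintype ι] [Nonempty ι] {p e : ℕ}
    (hp : 1 < p) (he : e ≠ 0) (α : AddAut (ι → ZMod (p ^ e))) :
    addOrderOf α ≤ p ^ (e - 1) * (p ^ Fintype.card ι - 1) := by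
  classical
  have : NeZero (p ^ e) := ⟨pow_ne_zero e (by omega)⟩
  have hinj := AddAut.toMatrix_injective ι (p ^ e)
  rw [← orderOf_ofAdd_eq_addOrderOf, ← orderOf_injective _ hinj]
  refine Matrix.orderOf_le_of_zmod_pow hp he ?_
  rw [orderOf_injective _ hinj, orderOf_ofAdd_eq_addOrderOf]
  exact addOrderOf_pos α

theorem two_mul_pow_pred_mul_pow_sub_one_lt {p n e : ℕ} (hp : 2 ≤ p) (hn : 2 ≤ n)
    (he : 2 ≤ e) :
    2 * (p ^ (e - 1) * (p ^ n - 1)) < (p ^ e) ^ n := by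
  have hpn : 0 < p ^ n := by positivity
  calc 2 * (p ^ (e - 1) * (p ^ n - 1)) < 2 * (p ^ (e - 1) * p ^ n) := by gcongr; omega
    _ ≤ p * (p ^ (e - 1) * p ^ n) := by gcongr
    _ = p ^ (e + n) := by rw [← mul_assoc, ← pow_succ', ← pow_add]; congr 1; omega
    _ ≤ p ^ (e * n) := Nat.pow_le_pow_right (by omega) (by nlinarith)
    _ = (p ^ e) ^ n := pow_mul p e n

/-- The maximum automorphism order of `(ℤ/p^eℤ)^n` is at most
`p^(e-1)·(p^n - 1)`; in particular for `n, e ≥ 2` every automorphism has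
`λ`-value less than `1/2`. -/
theorem stmt11 (p n e : ℕ) (hp : p.Prime) (hn : 0 < n) (he : 0 < e) :
    (∀ α : AddAut (Fin n → ZMod (p ^ e)), addOrderOf α ≤ p ^ (e - 1) * (p ^ n - 1)) ∧
    (2 ≤ n → 2 ≤ e →
      ∀ α : AddAut (Fin n → ZMod (p ^ e)),
        (maxCycleLen (α : (Fin n → ZMod (p ^ e)) → (Fin n → ZMod (p ^ e))) : ℚ) /
          Nat.card (Fin n → ZMod (p ^ e)) < 1 / 2) := by
  have hp₀ := hp.pos
  have : Nonempty (Fin n) := ⟨⟨0, hn⟩⟩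
  have : NeZero (p ^ e) := ⟨by positivity⟩
  have hbound (α : AddAut (Fin n → ZMod (p ^ e))) :
      addOrderOf α ≤ p ^ (e - 1) * (p ^ n - 1) := by
    simpa using α.addOrderOf_le_of_zmod_pow hp.one_lt he.ne'
  refine ⟨hbound, fun hn2 he2 α => ?_⟩
  have hcycle : 2 * maxCycleLen α < (p ^ e) ^ n := by
    have := α.maxCycleLen_le_addOrderOf.trans (hbound α)
    have := two_mul_pow_pred_mul_pow_sub_one_lt hp.two_le hn2 he2
    omega
  rw [Nat.card_fun, Nat.card_zmod, Nat.card_fin, div_lt_iff₀ (by positivity)]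
  have : ((2 * maxCycleLen α : ℕ) : ℚ) < ((p ^ e) ^ n : ℕ) := by exact_mod_cast hcycle
  push_cast at this ⊢
  linarith
end

section
/- Let G be an elementary abelian 2-group of order at least 2^4, and let α be an automorphism of G with λ(α) ≥ 1/2, where λ(α) is the largest cycle length of α divided by |G|. Then λ(α) > 1/2 (i.e., the value 1/2 is not attained). -/
/-!
Over `𝔽_p`, `A ^ p ^ k = 1 + (A - 1) ^ p ^ k`, so `x` is fixed by `A ^ p ^ k` exactly when `A - 1`
kills `x` after `p ^ k` steps. Once `A - 1` kills `x` it does so within `dim V` steps, hence the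
period of `x` under `A` (a power of `p` as soon as it divides one) is at most the least power of `p`
that is `≥ dim V`. For `p = 2` and `dim V = n ≥ 4` this is at most `2 ^ (n - 2)`, so no orbit of
`α` has length `2 ^ (n - 1) = |G| / 2`; since the maximal cycle length is attained by some orbit,
`λ(α) ≠ 1/2`.
-/

open Function Module

section CharP

variable {K V : Type*} [Field K] [AddCommGroup V] [Module K V] (p : ℕ) [Fact p.Prime] [CharP K p]

theorem Module.End.pow_char_pow_apply_eq_self_iff (A : End K V) (k : ℕ) (x : V) :
    (A ^ p ^ k) x = x ↔ ((A - 1) ^ p ^ k) x = 0 := by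
  cases subsingleton_or_nontrivial V
  · exact iff_of_true (Subsingleton.elim _ _) (Subsingleton.elim _ _)
  have : CharP (End K V) p := charP_of_injective_algebraMap' K p
  rw [sub_pow_char_pow_of_commute p k (Commute.one_right A), one_pow, LinearMap.sub_apply,
    Module.End.one_apply, sub_eq_zero]

variable [FiniteDimensional K V] {p}

theorem Module.End.pow_char_pow_apply_eq_self_of_finrank_le {A : End K V} {x : V} {k j : ℕ}
    (hx : (A ^ p ^ k) x = x) (hj : finrank K V ≤ p ^ j) : (A ^ p ^ j) x = x := by
  rw [pow_char_pow_apply_eq_self_iff p] at hx ⊢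
  have hfin : ((A - 1) ^ finrank K V) x = 0 := ker_pow_le_ker_pow_finrank (A - 1) (p ^ k) hx
  rw [← Nat.sub_add_cancel hj, pow_add, Module.End.mul_apply, hfin, map_zero]

theorem Module.End.minimalPeriod_ne_char_pow (A : End K V) (x : V) {j k : ℕ}
    (hj : finrank K V ≤ p ^ j) (hjk : j < k) : minimalPeriod A x ≠ p ^ k := by
  intro hper
  have hxk : (A ^ p ^ k) x = x := by
    rw [Module.End.pow_apply, ← hper]; exact iterate_minimalPeriod
  have hxj : IsPeriodicPt A (p ^ j) x := by
    rw [IsPeriodicPt, IsFixedPt, ← Module.End.pow_apply]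
    exact pow_char_pow_apply_eq_self_of_finrank_le hxk hj
  have hle := hxj.minimalPeriod_le (pow_pos (Fact.out : p.Prime).pos j)
  rw [hper] at hle
  exact (Nat.pow_lt_pow_right (Fact.out : p.Prime).one_lt hjk).not_ge hle

end CharP

theorem le_two_pow_sub_two {n : ℕ} (hn : 4 ≤ n) : n ≤ 2 ^ (n - 2) := by
  obtain ⟨m, rfl⟩ := Nat.exists_eq_add_of_le' hn
  have := Nat.lt_two_pow_self (n := m)
  rw [show m + 4 - 2 = m + 2 by omega, pow_add]
  omega

theorem maxCycleLen_mem_range {X : Type*} [Finite X] [Nonempty X] (f : X → X) :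
    maxCycleLen f ∈ Set.range (minimalPeriod f) :=
  Nat.sSup_mem (Set.range_nonempty _) (Set.finite_range _).bddAbove

theorem AddAut.minimalPeriod_ne_two_pow_pred {n : ℕ} (hn : 4 ≤ n) (α : AddAut (Fin n → ZMod 2))
    (x : Fin n → ZMod 2) : minimalPeriod α x ≠ 2 ^ (n - 1) := by
  have hfin : finrank (ZMod 2) (Fin n → ZMod 2) ≤ 2 ^ (n - 2) := by
    rw [Module.finrank_fin_fun]; exact le_two_pow_sub_two hn
  exact Module.End.minimalPeriod_ne_char_pow (α.toAddMonoidHom.toZModLinearMap 2) x hfin (by omega)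

/-- An automorphism of an elementary abelian `2`-group of order at least `2^4`
with `λ`-value at least `1/2` has `λ`-value strictly greater than `1/2`. -/
theorem stmt12 (n : ℕ) (hn : 4 ≤ n) (α : AddAut (Fin n → ZMod 2))
    (h : (maxCycleLen (α : (Fin n → ZMod 2) → (Fin n → ZMod 2)) : ℚ) /
        Nat.card (Fin n → ZMod 2) ≥ 1 / 2) :
    (maxCycleLen (α : (Fin n → ZMod 2) → (Fin n → ZMod 2)) : ℚ) /
        Nat.card (Fin n → ZMod 2) > 1 / 2 := by
  set M := maxCycleLen (α : (Fin n → ZMod 2) → (Fin n → ZMod 2))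
  obtain ⟨x, hx⟩ : M ∈ _ := maxCycleLen_mem_range _
  have hne : M ≠ 2 ^ (n - 1) := hx ▸ AddAut.minimalPeriod_ne_two_pow_pred hn α x
  refine lt_of_le_of_ne h fun heq => hne ?_
  have hcard : Nat.card (Fin n → ZMod 2) = 2 ^ (n - 1) * 2 := by
    rw [Nat.card_fun, Nat.card_zmod, Nat.card_eq_fintype_card, Fintype.card_fin, ← pow_succ]
    congr 1; omega
  rw [hcard, eq_div_iff (by positivity)] at heq
  push_cast at heq
  exact_mod_cast (by linarith : (M : ℚ) = 2 ^ (n - 1))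
end

section
/- Let r ≥ 1 and let d₁,...,d_r ≥ 2 be pairwise coprime integers. Then ∏_{i=1}^r (1 - 1/2^{d_i}) > ∏_p (1 - 1/2^p), where the right-hand product runs over all primes p. In particular, ∏_{i=1}^r (1 - 1/2^{d_i}) > 9/16. -/
open Real Finset

/-- `-log (1-x) ≤ 2x` for `0 ≤ x ≤ 1/2`. -/
lemma stmt15_neg_log_le {x : ℝ} (h0 : 0 ≤ x) (h2 : x ≤ 1/2) :
    -Real.log (1 - x) ≤ 2 * x := by
  have hx : (0:ℝ) < 1 - x := by linarith
  rw [neg_le, Real.le_log_iff_exp_le hx]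
  have he : Real.exp (-(2*x)) * Real.exp (2*x) = 1 := by
    rw [← Real.exp_add]; simp
  nlinarith [Real.add_one_le_exp (2*x), Real.exp_pos (2*x), Real.exp_pos (-(2*x))]

/-- Weierstrass product inequality. -/
lemma stmt15_weierstrass {ι : Type*} (s : Finset ι) (x : ι → ℝ)
    (h0 : ∀ i ∈ s, 0 ≤ x i) (h1 : ∀ i ∈ s, x i ≤ 1) :
    1 - ∑ i ∈ s, x i ≤ ∏ i ∈ s, (1 - x i) := by
  classical
  induction s using Finset.cons_induction with
  | empty => simp
  | cons a s ha ih =>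
    rw [Finset.sum_cons, Finset.prod_cons]
    have h0a := h0 a (Finset.mem_cons_self a s)
    have h1a := h1 a (Finset.mem_cons_self a s)
    have hs0 : ∀ i ∈ s, 0 ≤ x i := fun i hi => h0 i (Finset.mem_cons_of_mem hi)
    have hs1 : ∀ i ∈ s, x i ≤ 1 := fun i hi => h1 i (Finset.mem_cons_of_mem hi)
    have ihs := ih hs0 hs1
    have hsum : ∑ i ∈ s, x i ≥ 0 := Finset.sum_nonneg hs0
    nlinarith

/-- For pairwise coprime integers `d₁,…,d_r ≥ 2`,
`∏ᵢ (1 - 1/2^{dᵢ}) > ∏_p (1 - 1/2^p)` (product over all primes); in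
particular the left-hand side exceeds `9/16`. -/
theorem stmt15 (r : ℕ) (hr : 0 < r) (d : Fin r → ℕ) (hd : ∀ i, 2 ≤ d i)
    (hcop : Pairwise fun i j => Nat.Coprime (d i) (d j)) :
    (∏' p : {p : ℕ // p.Prime}, (1 - 1 / 2 ^ (p : ℕ) : ℝ)) < ∏ i, (1 - 1 / 2 ^ d i : ℝ) ∧
    (9 / 16 : ℝ) < ∏ i, (1 - 1 / 2 ^ d i : ℝ) := by
  classical
  set u : ℕ → ℝ := fun n => (1/2 : ℝ) ^ n with hu
  have hu_eq : ∀ n : ℕ, u n = 1 / 2 ^ n := fun n => one_div_pow 2 n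
  set F : {p : ℕ // p.Prime} → ℝ := fun p => 1 - u (p : ℕ) with hF
  have hFeq : ∀ p : {p : ℕ // p.Prime}, F p = (1 - 1 / 2 ^ (p : ℕ) : ℝ) := by
    intro p; show (1:ℝ) - u (p:ℕ) = 1 - 1/2 ^ (p:ℕ); rw [hu_eq]
  -- basic bounds
  have hu_nonneg : ∀ n : ℕ, 0 ≤ u n := fun n => by positivity
  have hu_le : ∀ n : ℕ, 2 ≤ n → u n ≤ 1/4 := by
    intro n hn
    show (1/2:ℝ) ^ n ≤ 1/4
    calc (1/2:ℝ) ^ n ≤ (1/2:ℝ) ^ 2 := pow_le_pow_of_le_one (by norm_num) (by norm_num) hn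
    _ = 1/4 := by norm_num
  have hF_pos : ∀ p : {p : ℕ // p.Prime}, 0 < F p := by
    intro p; have := hu_le p p.2.two_le; show (0:ℝ) < 1 - u (p:ℕ); linarith
  have hF_lt_one : ∀ p : {p : ℕ // p.Prime}, F p < 1 := by
    intro p
    have h : (0:ℝ) < (1/2:ℝ) ^ (p:ℕ) := by positivity
    show (1:ℝ) - (1/2:ℝ) ^ (p:ℕ) < 1
    linarith
  -- summability of u over primes
  have husum : Summable u := summable_geometric_two
  have husumP : Summable fun p : {p : ℕ // p.Prime} => u (p : ℕ) :=
    husum.subtype {p | p.Prime}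
  -- summability of -log ∘ F
  have hlog_nonneg : ∀ p : {p : ℕ // p.Prime}, 0 ≤ -Real.log (F p) := by
    intro p
    have : Real.log (F p) ≤ 0 :=
      Real.log_nonpos (le_of_lt (hF_pos p)) (le_of_lt (hF_lt_one p))
    linarith
  have hlog_le : ∀ p : {p : ℕ // p.Prime}, -Real.log (F p) ≤ 2 * u (p : ℕ) := by
    intro p
    exact stmt15_neg_log_le (hu_nonneg _) (by have := hu_le _ p.2.two_le; linarith)
  have hnegsum : Summable fun p : {p : ℕ // p.Prime} => -Real.log (F p) :=
    Summable.of_nonneg_of_le hlog_nonneg hlog_le (husumP.mul_left 2)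
  have hlogsum : Summable fun p : {p : ℕ // p.Prime} => Real.log (F p) := by
    simpa using hnegsum.neg
  set S : ℝ := ∑' p : {p : ℕ // p.Prime}, Real.log (F p) with hS
  have hProd : HasProd F (Real.exp S) := by
    have := hlogsum.hasSum.rexp
    refine this.congr_fun fun p => (Real.exp_log (hF_pos p)).symm
  -- the prime-power map
  have hd_pos : ∀ i, 0 < d i := fun i => lt_of_lt_of_le two_pos (hd i)
  set g : Fin r → {p : ℕ // p.Prime} :=
    fun i => ⟨(d i).minFac, Nat.minFac_prime (by have := hd i; omega)⟩ with hg
  have hginj : Function.Injective g := by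
    intro i j hij
    by_contra hne
    have hco : Nat.Coprime (d i) (d j) := hcop hne
    have h1 : (d i).minFac ∣ d i := Nat.minFac_dvd _
    have h2 : (d i).minFac ∣ d j := by
      have : (d i).minFac = (d j).minFac := congrArg Subtype.val hij
      rw [this]; exact Nat.minFac_dvd _
    have : (d i).minFac ∣ Nat.gcd (d i) (d j) := Nat.dvd_gcd h1 h2
    rw [hco] at this
    have := Nat.le_of_dvd one_pos this
    have h2le := (Nat.minFac_prime (show d i ≠ 1 by have := hd i; omega)).two_le
    omega
  set T : Finset {p : ℕ // p.Prime} := Finset.image g Finset.univ with hT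
  -- ∏_{p∈T} F p ≤ target product
  have hprodT : ∏ p ∈ T, F p ≤ ∏ i, (1 - 1 / 2 ^ d i : ℝ) := by
    rw [hT, Finset.prod_image (fun i _ j _ h => hginj h)]
    apply Finset.prod_le_prod
    · intro i _; exact le_of_lt (hF_pos (g i))
    · intro i _
      rw [hFeq]
      have hmle : (d i).minFac ≤ d i := Nat.le_of_dvd (hd_pos i) (Nat.minFac_dvd _)
      have : (1:ℝ) / 2 ^ d i ≤ 1 / 2 ^ (d i).minFac := by
        apply div_le_div_of_nonneg_left one_pos.le (by positivity)
        exact pow_le_pow_right₀ one_le_two hmle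
      simp only [hg]
      linarith
  have hprodT_pos : 0 < ∏ p ∈ T, F p := Finset.prod_pos fun p _ => hF_pos p
  -- extra prime q ∉ T
  haveI : Infinite {p : ℕ // p.Prime} :=
    Set.infinite_coe_iff.mpr Nat.infinite_setOf_prime
  obtain ⟨q, hq⟩ := Infinite.exists_notMem_finset T
  -- claim 1
  have hSle : S ≤ ∑ p ∈ insert q T, Real.log (F p) := by
    have h1 : ∑ p ∈ insert q T, -Real.log (F p) ≤
        ∑' p : {p : ℕ // p.Prime}, -Real.log (F p) :=
      Summable.sum_le_tsum _ (fun p _ => hlog_nonneg p) hnegsum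
    rw [tsum_neg] at h1
    rw [Finset.sum_neg_distrib] at h1
    rw [hS]; linarith
  have hexp_eq : Real.exp (∑ p ∈ insert q T, Real.log (F p)) = ∏ p ∈ insert q T, F p := by
    rw [Real.exp_sum]
    exact Finset.prod_congr rfl fun p _ => Real.exp_log (hF_pos p)
  have claim1 : (∏' p : {p : ℕ // p.Prime}, (1 - 1 / 2 ^ (p : ℕ) : ℝ)) < ∏ p ∈ T, F p := by
    have ht : (∏' p : {p : ℕ // p.Prime}, (1 - 1 / 2 ^ (p : ℕ) : ℝ)) = Real.exp S := by
      rw [← hProd.tprod_eq]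
      exact tprod_congr fun p => (hFeq p).symm
    rw [ht]
    calc Real.exp S ≤ ∏ p ∈ insert q T, F p := by
          rw [← hexp_eq]; exact Real.exp_le_exp.mpr hSle
      _ = F q * ∏ p ∈ T, F p := Finset.prod_insert hq
      _ < 1 * ∏ p ∈ T, F p := by
          exact mul_lt_mul_of_pos_right (hF_lt_one q) hprodT_pos
      _ = ∏ p ∈ T, F p := one_mul _
  -- claim 2 : 9/16 < ∏ T F
  have hsumT : ∑ p ∈ T, u (p : ℕ) ≤ 27/64 := by
    have h1 : ∑ p ∈ T, u (p : ℕ) ≤ ∑' p : {p : ℕ // p.Prime}, u (p : ℕ) :=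
      Summable.sum_le_tsum _ (fun p _ => hu_nonneg _) husumP
    -- bound the tsum over primes by tsum over {n // n ∉ A}, A = {0,1,4,6}
    set A : Finset ℕ := {0, 1, 4, 6} with hA
    have husumA : Summable fun n : {x : ℕ // x ∉ A} => u (n : ℕ) :=
      husum.subtype {x | x ∉ A}
    have h2 : (∑' p : {p : ℕ // p.Prime}, u (p : ℕ)) ≤
        ∑' n : {x : ℕ // x ∉ A}, u (n : ℕ) := by
      refine Summable.tsum_le_tsum_of_inj
        (fun p => ⟨(p : ℕ), ?_⟩)
        (fun p p' h => Subtype.ext (by have := congrArg Subtype.val h; simpa using this))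
        (fun c _ => hu_nonneg _) (fun p => le_refl _) husumP husumA
      have hp := p.2
      simp only [hA, Finset.mem_insert, Finset.mem_singleton]
      rintro (h | h | h | h) <;> rw [h] at hp <;> norm_num at hp
    have h3 : (∑ n ∈ A, u n) + (∑' n : {x : ℕ // x ∉ A}, u (n : ℕ)) = ∑' n, u n :=
      Summable.sum_add_tsum_compl husum
    have h4 : ∑' n, u n = 2 := tsum_geometric_two
    have h5 : ∑ n ∈ A, u n = 101/64 := by
      rw [hA]; norm_num [hu]
    linarith
  have claim2' : (37:ℝ)/64 ≤ ∏ p ∈ T, F p := by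
    have := stmt15_weierstrass T (fun p => u (p : ℕ))
      (fun p _ => hu_nonneg _)
      (fun p _ => by have := hu_le _ p.2.two_le; linarith)
    simp only [hF]
    linarith
  refine ⟨lt_of_lt_of_le claim1 hprodT, lt_of_lt_of_le (by norm_num) (le_trans claim2' hprodT)⟩
end

section
/- Let p be an odd prime and n ≥ 2. Then every bijective affine map of (Z/pZ)^n (i.e., every map of the form v ↦ v₀ + A·v with A an invertible n×n matrix over F_p) has a cycle structure with more than one cycle; equivalently, no affine permutation of (Z/pZ)^n acts as a single cycle of length p^n. -/
open Module Function

theorem sub_one_pow_char_pow (K : Type*) {A : Type*} [Field K] [Ring A] [Algebra K A] (p : ℕ)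
    [Fact p.Prime] [CharP K p] (a : A) (m : ℕ) : (a - 1) ^ p ^ m = a ^ p ^ m - 1 := by
  nontriviality A
  have := charP_of_injective_algebraMap' K (A := A) p
  rw [sub_pow_char_pow_of_commute p m (Commute.one_right a), one_pow]

namespace Module.End

variable {K V : Type*} [Field K] [AddCommGroup V] [Module K V] [FiniteDimensional K V]

theorem pow_char_pow_apply_eq_self_of_finrank_le_s16 (p : ℕ) [Fact p.Prime] [CharP K p]
    {T : End K V} {w : V} {m k : ℕ} (hw : (T ^ p ^ m) w = w) (hk : finrank K V ≤ p ^ k) :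
    (T ^ p ^ k) w = w := by
  have hker : ∀ j, w ∈ LinearMap.ker ((T - 1) ^ p ^ j) ↔ (T ^ p ^ j) w = w := fun j => by
    rw [LinearMap.mem_ker, sub_one_pow_char_pow K p, LinearMap.sub_apply, sub_eq_zero]; rfl
  rw [← hker, ker_pow_eq_ker_pow_finrank_of_le hk]
  exact ker_pow_le_ker_pow_finrank _ _ ((hker m).2 hw)

end Module.End

section AffineHomogenization

variable {K V : Type*} [Field K] [AddCommGroup V] [Module K V]

-- The block matrix `[[A, v₀], [0, 1]]`.
def affineHomogenization (v₀ : V) (A : V →ₗ[K] V) : End K (V × K) :=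
  (A ∘ₗ LinearMap.fst K V K + (LinearMap.snd K V K).smulRight v₀).prod (LinearMap.snd K V K)

theorem affineHomogenization_apply_one (v₀ : V) (A : V →ₗ[K] V) (v : V) :
    affineHomogenization v₀ A (v, 1) = (v₀ + A v, 1) := by
  simp [affineHomogenization, add_comm]

theorem affineHomogenization_pow_apply_one (v₀ : V) (A : V →ₗ[K] V) (k : ℕ) (v : V) :
    (affineHomogenization v₀ A ^ k) (v, 1) = ((fun v => v₀ + A v)^[k] v, 1) := by
  rw [End.pow_apply]
  have hsemiconj : Semiconj (fun v : V => (v, (1 : K))) (fun v => v₀ + A v)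
      (affineHomogenization v₀ A) := fun v => (affineHomogenization_apply_one v₀ A v).symm
  exact (hsemiconj.iterate_right k v).symm

theorem affine_iterate_pow_char_pow_eq_self_of_finrank_lt [FiniteDimensional K V] (p : ℕ)
    [Fact p.Prime] [CharP K p] {v₀ : V} {A : V →ₗ[K] V} {x : V} {m k : ℕ}
    (hx : (fun v => v₀ + A v)^[p ^ m] x = x) (hk : finrank K V < p ^ k) :
    (fun v => v₀ + A v)^[p ^ k] x = x := by
  have hB : ∀ j, (affineHomogenization v₀ A ^ p ^ j) (x, 1) = (x, 1) ↔
      (fun v => v₀ + A v)^[p ^ j] x = x := fun j => by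
    rw [affineHomogenization_pow_apply_one, Prod.mk.injEq, and_iff_left rfl]
  rw [← hB] at hx ⊢
  exact End.pow_char_pow_apply_eq_self_of_finrank_le_s16 p hx (by simpa [finrank_prod] using hk)

end AffineHomogenization

theorem exists_minimalPeriod_eq_maxCycleLen {X : Type*} [Finite X] [Nonempty X] (f : X → X) :
    ∃ x, minimalPeriod f x = maxCycleLen f :=
  Nat.sSup_mem (Set.range_nonempty _) (Set.finite_range _).bddAbove

theorem add_one_le_pow_sub_one {p n : ℕ} (hp : 3 ≤ p) (hn : 2 ≤ n) : n + 1 ≤ p ^ (n - 1) := by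
  induction n, hn using Nat.le_induction with
  | base => simpa using hp
  | succ n hn ih =>
    obtain ⟨m, rfl⟩ : ∃ m, n = m + 1 := ⟨n - 1, by omega⟩
    simp only [Nat.add_sub_cancel, pow_succ] at ih ⊢
    nlinarith

/-- For an odd prime `p` and `n ≥ 2`, no bijective affine map
`v ↦ v₀ + A·v` of `(ℤ/pℤ)^n` acts as a single cycle of length `p^n`. -/
theorem stmt16 (p : ℕ) (hp : p.Prime) (hodd : Odd p) (n : ℕ) (hn : 2 ≤ n)
    (v₀ : Fin n → ZMod p)
    (A : (Fin n → ZMod p) ≃ₗ[ZMod p] (Fin n → ZMod p)) :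
    maxCycleLen (fun v => v₀ + A v) ≠ p ^ n := by
  have := Fact.mk hp
  intro hmax
  obtain ⟨x, hx⟩ := exists_minimalPeriod_eq_maxCycleLen fun v => v₀ + A v
  rw [hmax] at hx
  have hcycle : (fun v => v₀ + (A : _ →ₗ[ZMod p] _) v)^[p ^ n] x = x :=
    hx ▸ iterate_minimalPeriod
  have hrank : finrank (ZMod p) (Fin n → ZMod p) < p ^ (n - 1) := by
    rw [finrank_fin_fun]
    exact add_one_le_pow_sub_one (by obtain ⟨k, rfl⟩ := hodd; have := hp.two_le; omega) hn
  have hshort := affine_iterate_pow_char_pow_eq_self_of_finrank_lt p hcycle hrank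
  have hle : p ^ n ≤ p ^ (n - 1) := hx ▸ IsPeriodicPt.minimalPeriod_le (pow_pos hp.pos _) hshort
  exact (Nat.pow_lt_pow_right hp.one_lt (by omega)).not_ge hle
end

section
/- Let n ≥ 3, let D_{2n} = ⟨r, x | r^n = x² = 1, x r x⁻¹ = r⁻¹⟩ be the dihedral group of order 2n, and let m be an integer with m ≡ 1 (mod p) for every prime p dividing n, and m ≡ 1 (mod 4) if 4 | n. Then the map sending r ↦ r^m, x ↦ x·r extends to an automorphism α of D_{2n}, and α has a cycle of length n on D_{2n} (namely, the coset x⟨r⟩ forms a single cycle), so λ(α) = 1/2. -/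
open Finset

theorem pow_eq_one_of_geom_sum_eq_zero {R : Type*} [CommRing R] {a : R} {k : ℕ}
    (h : ∑ i ∈ range k, a ^ i = 0) : a ^ k = 1 := by
  rw [← sub_eq_zero, ← geom_sum_mul, h, zero_mul]

theorem dvd_geom_sum_iff_of_dvd_sub_one {R : Type*} [CommRing R] {d m : R} (h : d ∣ m - 1)
    (k : ℕ) : d ∣ ∑ i ∈ range k, m ^ i ↔ d ∣ k := by
  simpa using dvd_geom_sum₂_iff_of_dvd_sub (n := k) (y := 1) h

theorem Int.emultiplicity_geom_sum {p : ℕ} (hp : p.Prime) {m : ℤ} (hpm : (p : ℤ) ∣ m - 1)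
    (h4 : p = 2 → 4 ∣ m - 1) (k : ℕ) :
    emultiplicity (p : ℤ) (∑ i ∈ Finset.range k, m ^ i) = emultiplicity (p : ℤ) k := by
  rcases eq_or_ne m 1 with rfl | hm1
  · simp
  have hpZ : Prime (p : ℤ) := Nat.prime_iff_prime_int.mp hp
  have hpm' : ¬ (p : ℤ) ∣ m := fun h =>
    hpZ.not_dvd_one (by simpa using dvd_sub h hpm)
  have lte : emultiplicity (p : ℤ) (m ^ k - 1 ^ k) =
      emultiplicity (p : ℤ) (m - 1) + emultiplicity (p : ℤ) k := by
    rcases hp.eq_two_or_odd' with rfl | hodd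
    · exact Int.two_pow_sub_pow' k (h4 rfl) (by simpa using hpm')
    · rw [Int.emultiplicity_pow_sub_pow hp hodd (by simpa using hpm) hpm',
        Int.natCast_emultiplicity]
  rw [one_pow, ← geom_sum_mul, emultiplicity_mul hpZ, add_comm] at lte
  exact WithTop.add_left_cancel (finiteMultiplicity_iff_emultiplicity_ne_top.mp
    (Int.finiteMultiplicity_iff.mpr ⟨by simpa using hp.ne_one, sub_ne_zero.mpr hm1⟩)) lte

theorem Int.prime_pow_dvd_geom_sum_iff {p : ℕ} (hp : p.Prime) {m : ℤ} (hpm : (p : ℤ) ∣ m - 1)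
    (h4 : p = 2 → 4 ∣ m - 1) (e k : ℕ) :
    (p : ℤ) ^ e ∣ ∑ i ∈ Finset.range k, m ^ i ↔ (p : ℤ) ^ e ∣ k := by
  rw [pow_dvd_iff_le_emultiplicity, pow_dvd_iff_le_emultiplicity,
    Int.emultiplicity_geom_sum hp hpm h4]

theorem Int.natCast_dvd_geom_sum_iff {n : ℕ} {m : ℤ}
    (hm : ∀ p : ℕ, p.Prime → p ∣ n → (p : ℤ) ∣ m - 1) (hm4 : 4 ∣ n → 4 ∣ m - 1) (k : ℕ) :
    (n : ℤ) ∣ ∑ i ∈ Finset.range k, m ^ i ↔ n ∣ k := by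
  have key : ∀ p e : ℕ, p.Prime → p ^ e ∣ n →
      ((p : ℤ) ^ e ∣ ∑ i ∈ Finset.range k, m ^ i ↔ (p : ℤ) ^ e ∣ k) := by
    intro p e hp hpe
    rcases Nat.eq_zero_or_pos e with rfl | he
    · simp
    have hpm := hm p hp ((dvd_pow_self p he.ne').trans hpe)
    by_cases h4 : p = 2 → 4 ∣ m - 1
    · exact Int.prime_pow_dvd_geom_sum_iff hp hpm h4 e k
    -- only `2 ∥ n` escapes the mod-4 hypothesis, and then `2 ∣ m - 1` suffices
    obtain ⟨rfl, hm1⟩ := Classical.not_imp.mp h4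
    obtain rfl : e = 1 := by
      by_contra he1
      exact hm1 (hm4 ((pow_dvd_pow 2 (by omega : 2 ≤ e)).trans hpe))
    simpa using dvd_geom_sum_iff_of_dvd_sub_one hpm k
  rw [Int.natCast_dvd, Nat.dvd_iff_prime_pow_dvd_dvd, Nat.dvd_iff_prime_pow_dvd_dvd k]
  refine forall₄_congr fun p e hp hpe => ?_
  rw [← Int.natCast_dvd, ← Int.natCast_dvd_natCast, Nat.cast_pow]
  exact key p e hp hpe

theorem maxCycleLen_eq_of_isPeriodicPt {X : Type*} {f : X → X} {n : ℕ} (hn : 0 < n)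
    (hf : ∀ y, Function.IsPeriodicPt f n y) {x : X} (hx : Function.minimalPeriod f x = n) :
    maxCycleLen f = n := by
  have hle : ∀ y, Function.minimalPeriod f y ≤ n := fun y =>
    Nat.le_of_dvd hn (hf y).minimalPeriod_dvd
  refine le_antisymm (csSup_le ⟨_, x, rfl⟩ (Set.forall_mem_range.mpr hle)) ?_
  exact le_csSup ⟨n, Set.forall_mem_range.mpr hle⟩ ⟨x, hx⟩

namespace DihedralGroup

variable {n : ℕ}

def affineAut (a : (ZMod n)ˣ) (b : ZMod n) : MulAut (DihedralGroup n) where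
  toFun
    | r i => r (a * i)
    | sr i => sr (a * i + b)
  invFun
    | r i => r (↑a⁻¹ * i)
    | sr i => sr (↑a⁻¹ * (i - b))
  left_inv := by rintro (i | i) <;> simp
  right_inv := by rintro (i | i) <;> simp
  map_mul' := by
    rintro (i | i) (j | j) <;> simp only [r_mul_r, r_mul_sr, sr_mul_r, sr_mul_sr] <;>
      congr 1 <;> ring

variable (a : (ZMod n)ˣ) (b : ZMod n)

@[simp] theorem affineAut_r (i : ZMod n) : affineAut a b (r i) = r ((a : ZMod n) * i) := rfl

@[simp] theorem affineAut_sr (i : ZMod n) : affineAut a b (sr i) = sr ((a : ZMod n) * i + b) := rfl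

theorem iterate_affineAut_r (k : ℕ) (i : ZMod n) :
    (affineAut a b)^[k] (r i) = r ((a : ZMod n) ^ k * i) := by
  induction k with
  | zero => simp
  | succ k ih => rw [Function.iterate_succ_apply', ih, affineAut_r, pow_succ', mul_assoc]

theorem iterate_affineAut_sr (k : ℕ) (i : ZMod n) :
    (affineAut a b)^[k] (sr i) =
      sr ((a : ZMod n) ^ k * i + b * ∑ j ∈ range k, (a : ZMod n) ^ j) := by
  induction k with
  | zero => simp
  | succ k ih =>
    rw [Function.iterate_succ_apply', ih, affineAut_sr, geom_sum_succ]
    congr 1; ring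

variable {a}

theorem isPeriodicPt_affineAut_one (ha : ∑ j ∈ range n, (a : ZMod n) ^ j = 0)
    (x : DihedralGroup n) :
    Function.IsPeriodicPt (affineAut a 1) n x := by
  have hpow := pow_eq_one_of_geom_sum_eq_zero ha
  cases x with
  | r i => simp [Function.IsPeriodicPt, Function.IsFixedPt, iterate_affineAut_r, hpow]
  | sr i => simp [Function.IsPeriodicPt, Function.IsFixedPt, iterate_affineAut_sr, hpow, ha]

theorem minimalPeriod_affineAut_one_sr_zero
    (ha : ∀ k, ∑ j ∈ range k, (a : ZMod n) ^ j = 0 ↔ n ∣ k) :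
    Function.minimalPeriod (affineAut a 1) (sr 0) = n := by
  have hper : ∀ k, Function.IsPeriodicPt (affineAut a 1) k (sr 0) ↔ n ∣ k := fun k => by
    simp [Function.IsPeriodicPt, Function.IsFixedPt, iterate_affineAut_sr, ha]
  refine Nat.dvd_antisymm ((hper n).mpr dvd_rfl).minimalPeriod_dvd ((hper _).mp ?_)
  exact Function.isPeriodicPt_minimalPeriod _ _

end DihedralGroup

/-- For `n ≥ 3` and `m` with `m ≡ 1 (mod p)` for every prime `p ∣ n` and
`m ≡ 1 (mod 4)` if `4 ∣ n`, the map `r ↦ r^m`, `x ↦ x·r` extends to an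
automorphism `α` of the dihedral group `D_{2n}` whose cycle containing `x` has
length `n` (so the coset `x⟨r⟩` is a single cycle), and `λ(α) = 1/2`. -/
theorem stmt18 (n : ℕ) (hn : 3 ≤ n) (m : ℤ)
    (hm : ∀ p : ℕ, p.Prime → p ∣ n → (p : ℤ) ∣ (m - 1))
    (hm4 : 4 ∣ n → (4 : ℤ) ∣ (m - 1)) :
    ∃ α : MulAut (DihedralGroup n),
      (∀ i : ZMod n, α (DihedralGroup.r i) = DihedralGroup.r ((m : ZMod n) * i)) ∧
      α (DihedralGroup.sr 0) = DihedralGroup.sr 0 * DihedralGroup.r 1 ∧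
      Function.minimalPeriod (α : DihedralGroup n → DihedralGroup n)
        (DihedralGroup.sr 0) = n ∧
      (maxCycleLen (α : DihedralGroup n → DihedralGroup n) : ℚ) /
        Nat.card (DihedralGroup n) = 1 / 2 := by
  have hS : ∀ k, ∑ j ∈ range k, (m : ZMod n) ^ j = 0 ↔ n ∣ k := fun k => by
    rw [← Int.natCast_dvd_geom_sum_iff hm hm4, ← ZMod.intCast_zmod_eq_zero_iff_dvd,
      Int.cast_sum]
    simp only [Int.cast_pow]
  obtain ⟨u, hu⟩ : IsUnit (m : ZMod n) :=
    IsUnit.of_pow_eq_one (pow_eq_one_of_geom_sum_eq_zero ((hS n).mpr dvd_rfl)) (by omega)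
  have hmin := DihedralGroup.minimalPeriod_affineAut_one_sr_zero (a := u) (hu ▸ hS)
  have hper := DihedralGroup.isPeriodicPt_affineAut_one (a := u) (hu ▸ (hS n).mpr dvd_rfl)
  refine ⟨DihedralGroup.affineAut u 1, fun i => by simp [hu], by simp, hmin, ?_⟩
  rw [maxCycleLen_eq_of_isPeriodicPt (by omega) hper hmin, DihedralGroup.nat_card]
  have : (n : ℚ) ≠ 0 := by positivity
  push_cast
  field_simp
end
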